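/- arXiv:1805.06098 — 9 statements merged into one kernel-verified Lean document; each statement's English description precedes it below -/
import Mathlib

section
/- Let H be a real Hilbert space, let φ : H → (−∞,∞] be proper, lower semicontinuous, and convex, let γ > 0, σ ∈ ℝ, and x ∈ H. If σ + γ φ*(x/γ) ≤ 0, then prox_{γφ̃}(σ,x) = (0,0). -/
open scoped RealInnerProductSpace

noncomputable section

/-- The Fenchel conjugate of an extended-real-valued function on a real inner
product space: `φ*(u) = sup_x (⟪x, u⟫ - φ x)`. -/
def eConj {H : Type*} [NormedAddCommGroup H] [InnerProductSpace ℝ H]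
    (φ : H → EReal) (u : H) : EReal :=
  ⨆ x : H, (((⟪x, u⟫ : ℝ) : EReal) - φ x)

/-- The recession function of `φ`: `(rec φ)(x) = sup_{y ∈ dom φ} (φ(x+y) - φ(y))`. -/
def eRec {H : Type*} [NormedAddCommGroup H] (φ : H → EReal) (x : H) : EReal :=
  ⨆ y : {y : H // φ y ≠ ⊤}, (φ (x + (y : H)) - φ (y : H))

/-- The perspective of `φ`: `σ φ(x/σ)` for `σ > 0`, `(rec φ)(x)` for `σ = 0`,
and `+∞` for `σ < 0`. -/
def persp {H : Type*} [NormedAddCommGroup H] [NormedSpace ℝ H]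
    (φ : H → EReal) (p : ℝ × H) : EReal :=
  if 0 < p.1 then (p.1 : EReal) * φ (p.1⁻¹ • p.2)
  else if p.1 = 0 then eRec φ p.2
  else ⊤

/-- `φ` is proper (nowhere `⊥` and not identically `⊤`), lower semicontinuous
and convex (convexity expressed via convexity of the epigraph). -/
def ProperLscConvex {H : Type*} [NormedAddCommGroup H] [NormedSpace ℝ H]
    (φ : H → EReal) : Prop :=
  (∃ x, φ x ≠ ⊤) ∧ (∀ x, φ x ≠ ⊥) ∧ LowerSemicontinuous φ ∧
    Convex ℝ {p : H × ℝ | φ p.1 ≤ (p.2 : EReal)}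

/-- `p` is the proximal point of `ψ : ℝ × H → (−∞,∞]` at `z`, i.e. `p` minimizes
`y ↦ ψ(y) + ½‖z − y‖²` (the squared norm on `ℝ × H` being the Hilbert one). -/
def IsProx {H : Type*} [NormedAddCommGroup H]
    (ψ : ℝ × H → EReal) (z p : ℝ × H) : Prop :=
  ∀ y : ℝ × H,
    ψ p + ((((z.1 - p.1) ^ 2 + ‖z.2 - p.2‖ ^ 2) / 2 : ℝ) : EReal) ≤
      ψ y + ((((z.1 - y.1) ^ 2 + ‖z.2 - y.2‖ ^ 2) / 2 : ℝ) : EReal)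

/-!
The linear functional `ℓ(τ, u) = σ τ + ⟪x, u⟫` minorizes `γ φ̃`: for `τ > 0` this is the
Fenchel–Young inequality at `x / γ` scaled by `τ`, using `σ / γ ≤ -φ*(x / γ)`; at `τ = 0` it says
`rec φ ≥ ⟪·, x / γ⟫`, obtained by evaluating the difference quotient of `φ` at near-maximizers of
the conjugate. Since `½‖z - q‖² = ½‖z‖² - ℓ(q) + ½‖q‖²` for `z = (σ, x)`, this makes `(0, 0)` a
proximal point. Conversely, `φ̃` vanishes at the origin and `φ̃(q / 2) ≤ φ̃(q) / 2`, so comparing a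
proximal point `p` with `p / 2`, and using `γ φ̃(p) ≥ ℓ(p)`, leaves `‖p‖² ≤ 0`.
-/

section Recession

variable {H : Type*} [NormedAddCommGroup H] {φ : H → EReal}

theorem eRec_zero {z : H} (hz : φ z ≠ ⊤) (hbot : ∀ y, φ y ≠ ⊥) : eRec φ 0 = 0 := by
  refine le_antisymm (iSup_le fun y => ?_) ?_
  · simp only [zero_add, EReal.sub_self y.2 (hbot y), le_refl]
  · calc (0 : EReal) = φ (0 + z) - φ z := by rw [zero_add, EReal.sub_self hz (hbot z)]
      _ ≤ eRec φ 0 := le_iSup (fun y : {y : H // φ y ≠ ⊤} => φ (0 + y) - φ y) ⟨z, hz⟩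

theorem apply_half_smul_add_half_smul_le [NormedSpace ℝ H]
    (hconv : Convex ℝ {p : H × ℝ | φ p.1 ≤ (p.2 : EReal)}) {y z : H} {a b : ℝ}
    (hy : φ y ≤ a) (hz : φ z ≤ b) :
    φ ((1 / 2 : ℝ) • y + (1 / 2 : ℝ) • z) ≤ ((a + b) / 2 : ℝ) := by
  have h := hconv (x := (y, a)) (y := (z, b)) hy hz (by norm_num : (0 : ℝ) ≤ 1 / 2)
    (by norm_num : (0 : ℝ) ≤ 1 / 2) (by norm_num)
  simp only [Set.mem_ofPred_eq, Prod.fst_add, Prod.snd_add, Prod.smul_fst, Prod.smul_snd,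
    smul_eq_mul] at h
  convert h using 2
  ring

theorem eRec_half_smul_le [NormedSpace ℝ H]
    (hconv : Convex ℝ {p : H × ℝ | φ p.1 ≤ (p.2 : EReal)}) (hbot : ∀ y, φ y ≠ ⊥) (v : H) :
    eRec φ ((1 / 2 : ℝ) • v) ≤ ((1 / 2 : ℝ) : EReal) * eRec φ v := by
  refine iSup_le fun ⟨y, hy⟩ => ?_
  obtain ⟨b, hb⟩ : ∃ b : ℝ, φ y = b := ⟨_, (EReal.coe_toReal hy (hbot y)).symm⟩
  have hle : φ (v + y) - b ≤ eRec φ v :=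
    hb ▸ le_iSup (fun y : {y : H // φ y ≠ ⊤} => φ (v + y) - φ y) ⟨y, hy⟩
  rcases eq_or_ne (φ (v + y)) ⊤ with htop | htop
  · rw [htop, EReal.top_sub_coe, top_le_iff] at hle
    rw [hle, EReal.coe_mul_top_of_pos (by norm_num)]
    exact le_top
  obtain ⟨d, hd⟩ : ∃ d : ℝ, φ (v + y) = d := ⟨_, (EReal.coe_toReal htop (hbot _)).symm⟩
  have hmid : φ ((1 / 2 : ℝ) • v + y) ≤ ((d + b) / 2 : ℝ) := by
    have h := apply_half_smul_add_half_smul_le hconv hd.le hb.le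
    rwa [show (1 / 2 : ℝ) • (v + y) + (1 / 2 : ℝ) • y = (1 / 2 : ℝ) • v + y by module] at h
  rw [hd, ← EReal.coe_sub] at hle
  change φ ((1 / 2 : ℝ) • v + y) - φ y ≤ _
  rw [hb]
  calc φ ((1 / 2 : ℝ) • v + y) - b ≤ (((d + b) / 2 : ℝ) : EReal) - b :=
        EReal.sub_le_sub hmid le_rfl
    _ = ((1 / 2 : ℝ) : EReal) * ((d - b : ℝ) : EReal) := by
      rw [← EReal.coe_sub, ← EReal.coe_mul]
      ring_nf
    _ ≤ ((1 / 2 : ℝ) : EReal) * eRec φ v := mul_le_mul_of_nonneg_left hle (by norm_num)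

theorem persp_zero [NormedSpace ℝ H] {z : H} (hz : φ z ≠ ⊤) (hbot : ∀ y, φ y ≠ ⊥) :
    persp φ 0 = 0 := by
  simp [persp, eRec_zero hz hbot]

theorem persp_half_smul_le [NormedSpace ℝ H]
    (hconv : Convex ℝ {p : H × ℝ | φ p.1 ≤ (p.2 : EReal)}) (hbot : ∀ y, φ y ≠ ⊥) (q : ℝ × H) :
    persp φ ((1 / 2 : ℝ) • q) ≤ ((1 / 2 : ℝ) : EReal) * persp φ q := by
  obtain ⟨τ, u⟩ := q
  rcases lt_trichotomy τ 0 with hτ | rfl | hτ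
  · simp [persp, hτ.ne, hτ.not_gt, EReal.coe_mul_top_of_pos]
  · simpa [persp] using eRec_half_smul_le hconv hbot u
  · have hτ' : 0 < 1 / 2 * τ := by positivity
    have hsmul : (1 / 2 * τ)⁻¹ • (1 / 2 : ℝ) • u = τ⁻¹ • u := by
      rw [smul_smul]; congr 1; field_simp
    simp only [persp, Prod.smul_mk, smul_eq_mul, if_pos hτ, if_pos hτ', hsmul, EReal.coe_mul,
      mul_assoc, le_refl]

end Recession

section Conjugate

variable {H : Type*} [NormedAddCommGroup H] [InnerProductSpace ℝ H] {φ : H → EReal}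

theorem coe_inner_sub_le_eConj (φ : H → EReal) (z w : H) :
    ((⟪z, w⟫ : ℝ) : EReal) - φ z ≤ eConj φ w :=
  le_iSup (fun z => ((⟪z, w⟫ : ℝ) : EReal) - φ z) z

theorem eConj_ne_bot {z : H} (hz_top : φ z ≠ ⊤) (hz_bot : φ z ≠ ⊥) (w : H) :
    eConj φ w ≠ ⊥ := by
  obtain ⟨b, hb⟩ : ∃ b : ℝ, φ z = b := ⟨_, (EReal.coe_toReal hz_top hz_bot).symm⟩
  refine ne_bot_of_le_ne_bot ?_ (coe_inner_sub_le_eConj φ z w)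
  rw [hb, ← EReal.coe_sub]
  exact EReal.coe_ne_bot _

theorem coe_inner_sub_le_of_eConj_eq {w : H} {c : ℝ} (hc : eConj φ w = c) (z : H) :
    ((⟪z, w⟫ - c : ℝ) : EReal) ≤ φ z := by
  have h := coe_inner_sub_le_eConj φ z w
  rw [hc, EReal.sub_le_iff_le_add (.inr (EReal.coe_ne_top c)) (.inr (EReal.coe_ne_bot c))] at h
  rw [EReal.coe_sub]
  exact EReal.sub_le_of_le_add' h

theorem coe_inner_le_eRec {w : H} {c : ℝ} (hc : eConj φ w = c) (u : H) :
    ((⟪u, w⟫ : ℝ) : EReal) ≤ eRec φ u := by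
  refine EReal.ge_of_forall_gt_iff_ge.mp fun t ht => ?_
  have ht' : ((c - (⟪u, w⟫ - t) : ℝ) : EReal) < eConj φ w := by
    rw [hc, EReal.coe_lt_coe_iff]
    linarith [EReal.coe_lt_coe_iff.mp ht]
  obtain ⟨z, hz⟩ := lt_iSup_iff.mp ht'
  have hz_top : φ z ≠ ⊤ := fun h => by simp [h] at hz
  have hz_bot : φ z ≠ ⊥ := fun h => by
    have := coe_inner_sub_le_eConj φ z w
    simp [h, hc] at this
  obtain ⟨b, hb⟩ : ∃ b : ℝ, φ z = b := ⟨_, (EReal.coe_toReal hz_top hz_bot).symm⟩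
  rw [hb, ← EReal.coe_sub, EReal.coe_lt_coe_iff] at hz
  calc (t : EReal) ≤ ((⟪u + z, w⟫ - c : ℝ) : EReal) - b := by
        rw [← EReal.coe_sub, EReal.coe_le_coe_iff, inner_add_left]
        linarith
    _ ≤ φ (u + z) - φ z := by
        rw [hb]
        exact EReal.sub_le_sub (coe_inner_sub_le_of_eConj_eq hc _) le_rfl
    _ ≤ eRec φ u := le_iSup (fun y : {y : H // φ y ≠ ⊤} => φ (u + y) - φ y) ⟨z, hz_top⟩

theorem coe_linear_le_persp {w : H} {a c : ℝ} (hc : eConj φ w = c) (hac : a + c ≤ 0)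
    (q : ℝ × H) : ((a * q.1 + ⟪w, q.2⟫ : ℝ) : EReal) ≤ persp φ q := by
  obtain ⟨τ, u⟩ := q
  rcases lt_trichotomy τ 0 with hτ | rfl | hτ
  · simp [persp, hτ.ne, hτ.not_gt]
  · simpa [persp, real_inner_comm] using coe_inner_le_eRec hc u
  · calc ((a * τ + ⟪w, u⟫ : ℝ) : EReal) ≤ ((τ * (⟪τ⁻¹ • u, w⟫ - c) : ℝ) : EReal) := by
          rw [EReal.coe_le_coe_iff, real_inner_smul_left, real_inner_comm, mul_sub,
            ← mul_assoc, mul_inv_cancel₀ hτ.ne', one_mul]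
          nlinarith
      _ ≤ (τ : EReal) * φ (τ⁻¹ • u) := by
          rw [EReal.coe_mul]
          exact mul_le_mul_of_nonneg_left (coe_inner_sub_le_of_eConj_eq hc _)
            (EReal.coe_nonneg.mpr hτ.le)
      _ = persp φ (τ, u) := by simp [persp, hτ]

end Conjugate

section Prox

variable {H : Type*} [NormedAddCommGroup H] [InnerProductSpace ℝ H] {ψ : ℝ × H → EReal}
  {z p : ℝ × H}

theorem sq_sub_add_norm_sub_sq (z q : ℝ × H) :
    (z.1 - q.1) ^ 2 + ‖z.2 - q.2‖ ^ 2 =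
      z.1 ^ 2 + ‖z.2‖ ^ 2 - 2 * (z.1 * q.1 + ⟪z.2, q.2⟫) + (q.1 ^ 2 + ‖q.2‖ ^ 2) := by
  rw [norm_sub_sq_real]
  ring

theorem isProx_zero_of_linear_le (h0 : ψ 0 = 0)
    (hψ : ∀ q, ((z.1 * q.1 + ⟪z.2, q.2⟫ : ℝ) : EReal) ≤ ψ q) : IsProx ψ z 0 := by
  intro q
  rw [h0, zero_add, Prod.fst_zero, Prod.snd_zero, sub_zero, sub_zero]
  calc (((z.1 ^ 2 + ‖z.2‖ ^ 2) / 2 : ℝ) : EReal)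
      ≤ ((z.1 * q.1 + ⟪z.2, q.2⟫ + ((z.1 - q.1) ^ 2 + ‖z.2 - q.2‖ ^ 2) / 2 : ℝ) : EReal) := by
        rw [EReal.coe_le_coe_iff, sq_sub_add_norm_sub_sq]
        nlinarith [sq_nonneg q.1, sq_nonneg ‖q.2‖]
    _ ≤ ψ q + (((z.1 - q.1) ^ 2 + ‖z.2 - q.2‖ ^ 2) / 2 : ℝ) := by
        rw [EReal.coe_add]
        exact add_le_add_left (hψ q) _

theorem eq_zero_of_isProx (h0 : ψ 0 = 0)
    (hψ : ∀ q, ((z.1 * q.1 + ⟪z.2, q.2⟫ : ℝ) : EReal) ≤ ψ q)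
    (hhalf : ∀ q, ψ ((1 / 2 : ℝ) • q) ≤ ((1 / 2 : ℝ) : EReal) * ψ q) (hp : IsProx ψ z p) :
    p = 0 := by
  have hp₀ := hp 0
  rw [h0, zero_add, Prod.fst_zero, Prod.snd_zero, sub_zero, sub_zero] at hp₀
  have hp_top : ψ p ≠ ⊤ := fun htop => by simp [htop] at hp₀
  have hp_bot : ψ p ≠ ⊥ := ne_bot_of_le_ne_bot (EReal.coe_ne_bot _) (hψ p)
  obtain ⟨s, hs⟩ : ∃ s : ℝ, ψ p = s := ⟨_, (EReal.coe_toReal hp_top hp_bot).symm⟩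
  have hs_ge : z.1 * p.1 + ⟪z.2, p.2⟫ ≤ s := EReal.coe_le_coe_iff.mp (hs ▸ hψ p)
  have hp_half := (hp ((1 / 2 : ℝ) • p)).trans (add_le_add_left (hhalf p) _)
  rw [hs, ← EReal.coe_mul, ← EReal.coe_add, ← EReal.coe_add, EReal.coe_le_coe_iff,
    sq_sub_add_norm_sub_sq, sq_sub_add_norm_sub_sq] at hp_half
  simp only [Prod.smul_fst, Prod.smul_snd, smul_eq_mul, norm_smul, real_inner_smul_right,
    Real.norm_eq_abs] at hp_half
  have hp_sq : p.1 ^ 2 + ‖p.2‖ ^ 2 ≤ 0 := by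
    rw [abs_of_pos one_half_pos] at hp_half
    nlinarith
  have h1 : p.1 = 0 := by nlinarith [sq_nonneg p.1, sq_nonneg ‖p.2‖]
  have h2 : p.2 = 0 := by
    rw [← norm_eq_zero]
    nlinarith [sq_nonneg p.1, sq_nonneg ‖p.2‖, norm_nonneg p.2]
  exact Prod.ext h1 h2

end Prox

theorem prox_perspective_eq_zero_general
    {H : Type*} [NormedAddCommGroup H] [InnerProductSpace ℝ H]
    (φ : H → EReal) (hφ : ProperLscConvex φ)
    (γ : ℝ) (hγ : 0 < γ) (σ : ℝ) (x : H)
    (h : (σ : EReal) + (γ : EReal) * eConj φ (γ⁻¹ • x) ≤ 0) :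
    ∀ p : ℝ × H, IsProx (fun q => (γ : EReal) * persp φ q) (σ, x) p ↔ p = (0, 0) := by
  obtain ⟨⟨z₀, hz₀⟩, hbot, -, hconv⟩ := hφ
  have hγ₀ : (0 : EReal) ≤ γ := EReal.coe_nonneg.mpr hγ.le
  have hc_top : eConj φ (γ⁻¹ • x) ≠ ⊤ := fun htop => by
    simp [htop, EReal.coe_mul_top_of_pos hγ] at h
  obtain ⟨c, hc⟩ : ∃ c : ℝ, eConj φ (γ⁻¹ • x) = c :=
    ⟨_, (EReal.coe_toReal hc_top (eConj_ne_bot hz₀ (hbot z₀) _)).symm⟩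
  have hσc : σ / γ + c ≤ 0 := by
    rw [hc, ← EReal.coe_mul, ← EReal.coe_add, ← EReal.coe_zero, EReal.coe_le_coe_iff] at h
    rw [div_add' _ _ _ hγ.ne']
    exact div_nonpos_of_nonpos_of_nonneg (by linarith) hγ.le
  have hψ (q : ℝ × H) : ((σ * q.1 + ⟪x, q.2⟫ : ℝ) : EReal) ≤ γ * persp φ q :=
    calc ((σ * q.1 + ⟪x, q.2⟫ : ℝ) : EReal)
        = γ * ((σ / γ * q.1 + ⟪γ⁻¹ • x, q.2⟫ : ℝ) : EReal) := by
          rw [← EReal.coe_mul, real_inner_smul_left]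
          congr 1
          field_simp
      _ ≤ γ * persp φ q := mul_le_mul_of_nonneg_left (coe_linear_le_persp hc hσc q) hγ₀
  have h0 : (γ : EReal) * persp φ 0 = 0 := by rw [persp_zero hz₀ hbot, mul_zero]
  have hhalf (q : ℝ × H) :
      (γ : EReal) * persp φ ((1 / 2 : ℝ) • q) ≤ ((1 / 2 : ℝ) : EReal) * (γ * persp φ q) := by
    rw [mul_left_comm]
    exact mul_le_mul_of_nonneg_left (persp_half_smul_le hconv hbot q) hγ₀
  exact fun p => ⟨eq_zero_of_isProx h0 hψ hhalf, fun hp => hp ▸ isProx_zero_of_linear_le h0 hψ⟩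

/-- If `σ + γ φ*(x/γ) ≤ 0` then `prox_{γφ̃}(σ, x) = (0, 0)`. -/
theorem prox_perspective_eq_zero
    {H : Type*} [NormedAddCommGroup H] [InnerProductSpace ℝ H] [CompleteSpace H]
    (φ : H → EReal) (hφ : ProperLscConvex φ)
    (γ : ℝ) (hγ : 0 < γ) (σ : ℝ) (x : H)
    (h : (σ : EReal) + (γ : EReal) * eConj φ (γ⁻¹ • x) ≤ 0) :
    ∀ p : ℝ × H, IsProx (fun q => (γ : EReal) * persp φ q) (σ, x) p ↔ p = (0, 0) :=
  prox_perspective_eq_zero_general φ hφ γ hγ σ x h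
end
end

section
/- Let H be a real Hilbert space, let ϕ : ℝ → (−∞,∞] be an even, proper, lower semicontinuous, convex function, set φ = ϕ∘‖·‖ : H → (−∞,∞], let γ > 0 and σ ∈ ℝ. If σ > γ ϕ(0), then prox_{γφ̃}(σ,0) = (σ − γϕ(0), 0). -/
open scoped RealInnerProductSpace

noncomputable section

/-! Averaging the epigraph points `(ξ, t)` and `(-ξ, t)` shows that the even convex
function `ϕ` is minimal at `0`, so with `r = ϕ 0` every value of the perspective satisfies
`φ̃(s, x) ≥ s r` (for `s = 0` because `rec φ (x) ≥ φ x - φ 0 ≥ 0`). Since `σ - γ r > 0` this bound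
is attained at `p = (σ - γ r, 0)`; thus `(σ, 0) - p = (γ r, 0)` is a subgradient of `γ φ̃` at `p`,
which characterises `p` as the proximal point. -/

theorem apply_zero_le_of_even_of_convex_epigraph {E : Type*} [AddCommGroup E] [Module ℝ E]
    {φ : E → EReal} (hconv : Convex ℝ {p : E × ℝ | φ p.1 ≤ (p.2 : EReal)})
    (heven : ∀ x, φ (-x) = φ x) (x : E) : φ 0 ≤ φ x := by
  refine EReal.le_of_forall_lt_iff_le.mp fun t ht => ?_
  have hx : ((x, t) : E × ℝ) ∈ {p : E × ℝ | φ p.1 ≤ (p.2 : EReal)} := ht.le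
  have hnx : ((-x, t) : E × ℝ) ∈ {p : E × ℝ | φ p.1 ≤ (p.2 : EReal)} := by
    change φ (-x) ≤ t
    rw [heven]
    exact ht.le
  have hmid := hconv hx hnx (by norm_num : (0 : ℝ) ≤ 1 / 2) (by norm_num : (0 : ℝ) ≤ 1 / 2)
    (add_halves 1)
  have hcomb : (1 / 2 : ℝ) • ((x, t) : E × ℝ) + (1 / 2 : ℝ) • (-x, t) = (0, t) := by
    ext
    · simp
    · simp only [Prod.smul_mk, Prod.snd_add, smul_eq_mul]
      ring
  rw [hcomb] at hmid
  exact hmid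

theorem sub_le_eRec {H : Type*} [NormedAddCommGroup H] {φ : H → EReal} {y : H} (hy : φ y ≠ ⊤)
    (x : H) : φ (x + y) - φ y ≤ eRec φ x :=
  le_iSup (fun y : {y : H // φ y ≠ ⊤} => φ (x + (y : H)) - φ (y : H)) ⟨y, hy⟩

theorem coe_mul_le_persp {H : Type*} [NormedAddCommGroup H] [NormedSpace ℝ H] {φ : H → EReal}
    {r : ℝ} (hr : φ 0 = r) (hmin : ∀ x, (r : EReal) ≤ φ x) (y : ℝ × H) :
    ((y.1 * r : ℝ) : EReal) ≤ persp φ y := by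
  rcases lt_trichotomy 0 y.1 with hpos | hzero | hneg
  · rw [persp, if_pos hpos, EReal.coe_mul]
    exact mul_le_mul_of_nonneg_left (hmin _) (EReal.coe_nonneg.mpr hpos.le)
  · rw [persp, if_neg hzero.not_lt, if_pos hzero.symm, ← hzero, zero_mul, EReal.coe_zero]
    calc (0 : EReal) ≤ φ (y.2 + 0) - φ 0 := by
          rw [add_zero, hr]
          exact (EReal.sub_nonneg (Or.inr (EReal.coe_ne_top r)) (Or.inr (EReal.coe_ne_bot r))).mpr
            (hmin _)
      _ ≤ eRec φ y.2 := sub_le_eRec (by rw [hr]; exact EReal.coe_ne_top r) y.2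
  · rw [persp, if_neg (not_lt.mpr hneg.le), if_neg hneg.ne]
    exact le_top

theorem isProx_iff_eq_of_subgradient {H : Type*} [NormedAddCommGroup H] [InnerProductSpace ℝ H]
    {ψ : ℝ × H → EReal} {z p : ℝ × H} {c : ℝ} (hp : ψ p = c)
    (hsub : ∀ y : ℝ × H,
      ((c + (z.1 - p.1) * (y.1 - p.1) + ⟪z.2 - p.2, y.2 - p.2⟫ : ℝ) : EReal) ≤ ψ y)
    (q : ℝ × H) : IsProx ψ z q ↔ q = p := by
  have key : ∀ y : ℝ × H,
      ((c + ((z.1 - p.1) ^ 2 + ‖z.2 - p.2‖ ^ 2) / 2 + ((y.1 - p.1) ^ 2 + ‖y.2 - p.2‖ ^ 2) / 2 :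
        ℝ) : EReal) ≤ ψ y + ((((z.1 - y.1) ^ 2 + ‖z.2 - y.2‖ ^ 2) / 2 : ℝ) : EReal) := by
    intro y
    have hnorm := norm_sub_sq_real (z.2 - p.2) (y.2 - p.2)
    rw [sub_sub_sub_cancel_right] at hnorm
    calc _ = ((c + (z.1 - p.1) * (y.1 - p.1) + ⟪z.2 - p.2, y.2 - p.2⟫ : ℝ) : EReal) +
          ((((z.1 - y.1) ^ 2 + ‖z.2 - y.2‖ ^ 2) / 2 : ℝ) : EReal) := by
          rw [← EReal.coe_add, EReal.coe_eq_coe_iff]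
          linear_combination (-1 / 2 : ℝ) * hnorm
      _ ≤ _ := add_le_add_left (hsub y) _
  constructor
  · intro hq
    have hle := (key q).trans (hq p)
    rw [hp, ← EReal.coe_add, EReal.coe_le_coe_iff] at hle
    have h1 : (q.1 - p.1) ^ 2 = 0 := by nlinarith [sq_nonneg (q.1 - p.1), sq_nonneg ‖q.2 - p.2‖]
    have h2 : ‖q.2 - p.2‖ ^ 2 = 0 := by nlinarith [sq_nonneg (q.1 - p.1), sq_nonneg ‖q.2 - p.2‖]
    exact Prod.ext (sub_eq_zero.mp (pow_eq_zero_iff two_ne_zero |>.mp h1))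
      (norm_sub_eq_zero_iff.mp (pow_eq_zero_iff two_ne_zero |>.mp h2))
  · rintro rfl y
    refine le_trans ?_ (key y)
    rw [hp, ← EReal.coe_add, EReal.coe_le_coe_iff]
    nlinarith [sq_nonneg (y.1 - q.1), sq_nonneg ‖y.2 - q.2‖]

theorem radial_perspective_prox_at_zero_general
    {H : Type*} [NormedAddCommGroup H] [InnerProductSpace ℝ H]
    (ϕ : ℝ → EReal) (heven : ∀ ξ : ℝ, ϕ (-ξ) = ϕ ξ) (hϕ : ProperLscConvex ϕ)
    (γ : ℝ) (hγ : 0 < γ) (σ : ℝ)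
    (h : (γ : EReal) * ϕ 0 < (σ : EReal)) :
    ∀ p : ℝ × H,
      IsProx (fun q => (γ : EReal) * persp (fun v : H => ϕ ‖v‖) q) (σ, (0 : H)) p ↔
        p = (σ - γ * (ϕ 0).toReal, (0 : H)) := by
  obtain ⟨-, hbot, -, hconv⟩ := hϕ
  have htop : ϕ 0 ≠ ⊤ := fun h0 => by
    rw [h0, EReal.coe_mul_top_of_pos hγ] at h
    exact not_top_lt h
  set r := (ϕ 0).toReal
  have hr : ϕ 0 = r := (EReal.coe_toReal htop (hbot 0)).symm
  have hmin : ∀ v : H, (r : EReal) ≤ ϕ ‖v‖ := fun v =>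
    hr ▸ apply_zero_le_of_even_of_convex_epigraph hconv heven ‖v‖
  have hτ : 0 < σ - γ * r := by
    rw [hr, ← EReal.coe_mul, EReal.coe_lt_coe_iff] at h
    linarith
  refine isProx_iff_eq_of_subgradient (c := γ * ((σ - γ * r) * r)) ?_ fun y => ?_
  · simp only [persp, if_pos hτ, smul_zero, norm_zero, hr, EReal.coe_mul]
  · calc _ = ((γ * (y.1 * r) : ℝ) : EReal) := by
          rw [EReal.coe_eq_coe_iff]
          simp only [sub_self, inner_zero_left, sub_zero]
          ring
      _ ≤ _ := by
          rw [EReal.coe_mul]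
          exact mul_le_mul_of_nonneg_left
            (coe_mul_le_persp (by simpa only [norm_zero] using hr) hmin y)
            (EReal.coe_nonneg.mpr hγ.le)

/-- For even `ϕ ∈ Γ₀(ℝ)`, `φ = ϕ ∘ ‖·‖`, `γ > 0` and `σ > γϕ(0)`,
`prox_{γφ̃}(σ, 0) = (σ − γϕ(0), 0)`. -/
theorem radial_perspective_prox_at_zero
    {H : Type*} [NormedAddCommGroup H] [InnerProductSpace ℝ H] [CompleteSpace H]
    (ϕ : ℝ → EReal) (heven : ∀ ξ : ℝ, ϕ (-ξ) = ϕ ξ) (hϕ : ProperLscConvex ϕ)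
    (γ : ℝ) (hγ : 0 < γ) (σ : ℝ)
    (h : (γ : EReal) * ϕ 0 < (σ : EReal)) :
    ∀ p : ℝ × H,
      IsProx (fun q => (γ : EReal) * persp (fun v : H => ϕ ‖v‖) q) (σ, (0 : H)) p ↔
        p = (σ - γ * (ϕ 0).toReal, (0 : H)) :=
  radial_perspective_prox_at_zero_general ϕ heven hϕ γ hγ σ h
end
end

section
/- Let H be a real Hilbert space, let ϕ : ℝ → (−∞,∞] be an even, proper, lower semicontinuous, convex function, set φ = ϕ∘‖·‖ : H → (−∞,∞], let γ > 0, σ ∈ ℝ, and x ∈ H with x ≠ 0, and set R = {(χ,ν) ∈ ℝ² : χ + ϕ*(ν) ≤ 0}. Suppose σ + γ ϕ*(‖x‖/γ) > 0, and let (χ,ν) be the metric projection of (σ/γ, ‖x‖/γ) onto R. Then prox_{γφ̃}(σ,x) = (σ − γχ, (1 − γν/‖x‖) x). -/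
open scoped RealInnerProductSpace

noncomputable section

/-!
Write `α = σ - γχ` and `β = ‖x‖ - γν`. The set `R` consists of the intercept–slope pairs of the
affine minorants of `ϕ`, so it is convex, and the projection property of `(χ, ν)` becomes the
variational inequality `α (d - χ) + β (m - ν) ≤ 0` on `R`. Since `ϕ` is even, `R` is stable
under shrinking `|m|` and lowering `d`, which forces `α ≥ 0` and `0 ≤ ν ≤ ‖x‖ / γ`.

As `y ↦ ν y + χ` minorizes `ϕ`, the perspective of `γ φ` lies above the linear form
`(τ, v) ↦ γ χ τ + ⟪(γν / ‖x‖) x, v⟫`. By Fenchel–Moreau (`ϕ` is the supremum of its affine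
minorants) and the variational inequality, it agrees with this form at
`p = (α, (1 - γν/‖x‖) x)`. Since `(σ, x) - p` is the gradient of the form, the prox objective at
`y` is at least its value at `p` plus `½ ‖y - p‖²`.
-/

/-- The intercept comes first, so that `R = {(χ, ν) | χ + ϕ*(ν) ≤ 0}` is `affineMinorants ϕ`
(`mem_affineMinorants_iff`). -/
def affineMinorants (ϕ : ℝ → EReal) : Set (ℝ × ℝ) :=
  {w | ∀ y, ((w.2 * y + w.1 : ℝ) : EReal) ≤ ϕ y}

lemma EReal.coe_le_of_forall_le_coe {q : ℝ} {e : EReal} (h : ∀ r : ℝ, e ≤ r → q ≤ r) :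
    (q : EReal) ≤ e := by
  induction e using EReal.rec with
  | bot => linarith [h (q - 1) bot_le]
  | coe r => exact_mod_cast h r le_rfl
  | top => exact le_top

lemma EReal.coe_sub_le_coe_iff {a b : ℝ} {e : EReal} :
    (a : EReal) - e ≤ b ↔ ((a - b : ℝ) : EReal) ≤ e := by
  induction e using EReal.rec with
  | bot => simp only [EReal.coe_sub_bot, top_le_iff, le_bot_iff, EReal.coe_ne_top, EReal.coe_ne_bot]
  | coe r => norm_cast; constructor <;> intro h <;> linarith
  | top => simp

section AffineMinorants

variable {ϕ : ℝ → EReal}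

theorem mem_affineMinorants_iff {w : ℝ × ℝ} :
    w ∈ affineMinorants ϕ ↔ (w.1 : EReal) + eConj ϕ w.2 ≤ 0 := by
  have hshift : (w.1 : EReal) + eConj ϕ w.2 ≤ 0 ↔ eConj ϕ w.2 ≤ ((-w.1 : ℝ) : EReal) := by
    induction eConj ϕ w.2 using EReal.rec with
    | bot => simp
    | coe c => norm_cast; constructor <;> intro h <;> linarith
    | top => simp
  rw [hshift, eConj, iSup_le_iff]
  simp only [Real.inner_apply, EReal.coe_sub_le_coe_iff, sub_neg_eq_add]
  exact forall_congr' fun y => by rw [mul_comm]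

theorem convex_affineMinorants : Convex ℝ (affineMinorants ϕ) := by
  intro w₁ h₁ w₂ h₂ a b ha hb hab y
  refine EReal.coe_le_of_forall_le_coe fun r hr => ?_
  have e₁ : w₁.2 * y + w₁.1 ≤ r := by exact_mod_cast (h₁ y).trans hr
  have e₂ : w₂.2 * y + w₂.1 ≤ r := by exact_mod_cast (h₂ y).trans hr
  simp only [Prod.fst_add, Prod.snd_add, Prod.smul_fst, Prod.smul_snd, smul_eq_mul]
  have hr' : r = a * r + b * r := by rw [← add_mul, hab, one_mul]
  nlinarith [mul_le_mul_of_nonneg_left e₁ ha, mul_le_mul_of_nonneg_left e₂ hb]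

theorem mk_mem_affineMinorants_of_abs_le (heven : ∀ ξ, ϕ (-ξ) = ϕ ξ) {w : ℝ × ℝ}
    (hw : w ∈ affineMinorants ϕ) {d m : ℝ} (hd : d ≤ w.1) (hm : |m| ≤ |w.2|) :
    (d, m) ∈ affineMinorants ϕ := by
  intro y
  have hmy : m * y ≤ |w.2 * y| :=
    calc m * y ≤ |m| * |y| := abs_mul m y ▸ le_abs_self _
      _ ≤ |w.2| * |y| := mul_le_mul_of_nonneg_right hm (abs_nonneg y)
      _ = |w.2 * y| := (abs_mul _ _).symm
  rcases abs_choice (w.2 * y) with h | h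
  · exact le_trans (by exact_mod_cast (by linarith : m * y + d ≤ w.2 * y + w.1)) (hw y)
  · rw [← heven]
    exact le_trans (by exact_mod_cast (by linarith : m * y + d ≤ w.2 * -y + w.1)) (hw (-y))

lemma apply_abs_of_even (heven : ∀ ξ, ϕ (-ξ) = ϕ ξ) (s : ℝ) : ϕ |s| = ϕ s := by
  rcases abs_choice s with h | h <;> simp [h, heven]

lemma exists_coe_eq_of_mem_affineMinorants {w : ℝ × ℝ} (hw : w ∈ affineMinorants ϕ) (s : ℝ)
    (hs : ϕ s ≠ ⊤) : ∃ r : ℝ, ϕ s = r :=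
  ⟨_, (EReal.coe_toReal hs (ne_bot_of_le_ne_bot (EReal.coe_ne_bot _) (hw s))).symm⟩

lemma exists_eConj_eq_coe_of_mem_affineMinorants (hdom : ∃ s, ϕ s ≠ ⊤) {w : ℝ × ℝ}
    (hw : w ∈ affineMinorants ϕ) : ∃ c : ℝ, eConj ϕ w.2 = c := by
  have hw' := mem_affineMinorants_iff.1 hw
  have htop : eConj ϕ w.2 ≠ ⊤ := fun h => by simp [h] at hw'
  obtain ⟨s, hs⟩ := hdom
  obtain ⟨r, hr⟩ := exists_coe_eq_of_mem_affineMinorants hw s hs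
  have hbot : eConj ϕ w.2 ≠ ⊥ := ne_bot_of_le_ne_bot (EReal.coe_ne_bot (s * w.2 - r)) <| by
    rw [EReal.coe_sub, ← hr, ← Real.inner_apply]
    exact le_iSup (fun x : ℝ => (((⟪x, w.2⟫ : ℝ) : EReal) - ϕ x)) s
  exact ⟨_, (EReal.coe_toReal htop hbot).symm⟩

end AffineMinorants

lemma nonpos_of_forall_le_mul {e S : ℝ} (h : ∀ t : ℝ, 0 < t → t ≤ 1 → e ≤ t * S) : e ≤ 0 := by
  by_contra! he
  have hS : e ≤ S := by simpa using h 1 one_pos le_rfl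
  have := h (e / (2 * S)) (div_pos he (by linarith)) (by rw [div_le_one (by linarith)]; linarith)
  rw [div_mul_eq_mul_div, mul_div_mul_right _ _ (by linarith : S ≠ 0)] at this
  linarith

theorem Convex.variational_ineq_of_forall_sq_dist_le {K : Set (ℝ × ℝ)} (hK : Convex ℝ K)
    {a w₀ : ℝ × ℝ} (hw₀ : w₀ ∈ K)
    (hmin : ∀ w ∈ K, (a.1 - w₀.1) ^ 2 + (a.2 - w₀.2) ^ 2 ≤ (a.1 - w.1) ^ 2 + (a.2 - w.2) ^ 2) :
    ∀ w ∈ K, (a.1 - w₀.1) * (w.1 - w₀.1) + (a.2 - w₀.2) * (w.2 - w₀.2) ≤ 0 := by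
  intro w hw
  refine nonpos_of_forall_le_mul (S := ((w.1 - w₀.1) ^ 2 + (w.2 - w₀.2) ^ 2) / 2)
    fun t ht0 ht1 => ?_
  have := hmin _ (hK.add_smul_sub_mem hw₀ hw ⟨ht0.le, ht1⟩)
  simp only [Prod.fst_add, Prod.snd_add, Prod.smul_fst, Prod.smul_snd, Prod.fst_sub,
    Prod.snd_sub, smul_eq_mul] at this
  nlinarith

theorem bounds_of_variational_ineq {ϕ : ℝ → EReal} (heven : ∀ ξ, ϕ (-ξ) = ϕ ξ)
    {a₁ a₂ χ ν : ℝ} (ha₂ : 0 ≤ a₂) (hmem : (χ, ν) ∈ affineMinorants ϕ)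
    (hvi : ∀ w ∈ affineMinorants ϕ, (a₁ - χ) * (w.1 - χ) + (a₂ - ν) * (w.2 - ν) ≤ 0) :
    χ ≤ a₁ ∧ 0 ≤ ν ∧ ν ≤ a₂ := by
  have hlower := hvi _ (mk_mem_affineMinorants_of_abs_le heven hmem (sub_le_self χ zero_le_one)
    le_rfl)
  have hneg := hvi _ (mk_mem_affineMinorants_of_abs_le heven hmem le_rfl (abs_neg ν).le)
  refine ⟨by simpa using hlower, by nlinarith, ?_⟩
  by_contra! hν
  have hshrink := hvi _ (mk_mem_affineMinorants_of_abs_le heven hmem le_rfl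
    (show |a₂| ≤ |ν| by rw [abs_of_nonneg ha₂, abs_of_nonneg (ha₂.trans hν.le)]; exact hν.le))
  nlinarith

section FenchelMoreau

variable {ϕ : ℝ → EReal}

theorem LowerSemicontinuous.isClosed_realEpigraph (hϕ : LowerSemicontinuous ϕ) :
    IsClosed {p : ℝ × ℝ | ϕ p.1 ≤ (p.2 : EReal)} :=
  (lowerSemicontinuous_iff_isClosed_epigraph.mp hϕ).preimage
    (continuous_fst.prodMk (continuous_coe_real_ereal.comp continuous_snd))

theorem exists_affine_separation (hconv : Convex ℝ {p : ℝ × ℝ | ϕ p.1 ≤ (p.2 : EReal)})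
    (hlsc : LowerSemicontinuous ϕ) {s c : ℝ} (h : ¬ ϕ s ≤ c) :
    ∃ a b u : ℝ, a * s + b * c < u ∧ ∀ y r : ℝ, ϕ y ≤ r → u < a * y + b * r := by
  obtain ⟨f, u, hf, hepi⟩ := geometric_hahn_banach_point_closed hconv
    hlsc.isClosed_realEpigraph (x := (s, c)) h
  have hf_apply (y r : ℝ) : f (y, r) = f (1, 0) * y + f (0, 1) * r := by
    rw [show ((y, r) : ℝ × ℝ) = y • (1, 0) + r • (0, 1) by simp, map_add, map_smul, map_smul,
      smul_eq_mul, smul_eq_mul, mul_comm, mul_comm r]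
  exact ⟨f (1, 0), f (0, 1), u, hf_apply s c ▸ hf, fun y r hyr => hf_apply y r ▸ hepi (y, r) hyr⟩

theorem mem_affineMinorants_of_separation {a b u : ℝ} (hb : 0 < b)
    (h : ∀ y r : ℝ, ϕ y ≤ r → u < a * y + b * r) : (u / b, -a / b) ∈ affineMinorants ϕ := by
  refine fun y => EReal.coe_le_of_forall_le_coe fun r hr => ?_
  have := h y r hr
  rw [div_mul_eq_mul_div, ← add_div, div_le_iff₀ hb]
  linarith

theorem mem_affineMinorants_of_vertical_separation {w : ℝ × ℝ} (hw : w ∈ affineMinorants ϕ)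
    {a u : ℝ} (h : ∀ y r : ℝ, ϕ y ≤ r → u < a * y) {l : ℝ} (hl : 0 ≤ l) :
    (w.1 + l * u, w.2 - l * a) ∈ affineMinorants ϕ := by
  refine fun y => EReal.coe_le_of_forall_le_coe fun r hr => ?_
  have hwy : w.2 * y + w.1 ≤ r := by exact_mod_cast (hw y).trans hr
  nlinarith [h y r hr]

theorem ProperLscConvex.exists_coe_eq (hϕ : ProperLscConvex ϕ) : ∃ y₀ r₀ : ℝ, ϕ y₀ = r₀ := by
  obtain ⟨⟨y₀, htop⟩, hbot, -⟩ := hϕ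
  exact ⟨y₀, (ϕ y₀).toReal, (EReal.coe_toReal htop (hbot y₀)).symm⟩

theorem ProperLscConvex.affineMinorants_nonempty (hϕ : ProperLscConvex ϕ) :
    (affineMinorants ϕ).Nonempty := by
  obtain ⟨y₀, r₀, hy₀⟩ := hϕ.exists_coe_eq
  obtain ⟨a, b, u, hsep, hepi⟩ := exists_affine_separation hϕ.2.2.2 hϕ.2.2.1
    (s := y₀) (c := r₀ - 1) (by rw [hy₀]; exact_mod_cast (sub_one_lt r₀).not_ge)
  have hb : 0 < b := by linarith [hepi y₀ r₀ hy₀.le]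
  exact ⟨_, mem_affineMinorants_of_separation hb hepi⟩

theorem ProperLscConvex.exists_mem_affineMinorants_gt (hϕ : ProperLscConvex ϕ) {s c : ℝ}
    (h : ¬ ϕ s ≤ c) : ∃ w ∈ affineMinorants ϕ, c < w.2 * s + w.1 := by
  obtain ⟨a, b, u, hsep, hepi⟩ := exists_affine_separation hϕ.2.2.2 hϕ.2.2.1 h
  obtain ⟨y₀, r₀, hy₀⟩ := hϕ.exists_coe_eq
  have hb : 0 ≤ b := by
    by_contra! hb
    have h₀ := hepi y₀ r₀ hy₀.le
    set t := (a * y₀ + b * r₀ - u) / -b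
    have hbt : b * t = u - a * y₀ - b * r₀ := by
      simp only [t]; field_simp [hb.ne]; ring
    have ht : 0 ≤ t := div_nonneg (by linarith) (by linarith)
    have := hepi y₀ (r₀ + t) (hy₀.le.trans (by exact_mod_cast le_add_of_nonneg_right ht))
    linarith
  rcases hb.lt_or_eq with hb | rfl
  · refine ⟨_, mem_affineMinorants_of_separation hb hepi, ?_⟩
    rw [div_mul_eq_mul_div, ← add_div, lt_div_iff₀ hb]
    linarith
  · -- a vertical separating line tilts any minorant upwards at `s` as far as needed
    obtain ⟨w, hw⟩ := hϕ.affineMinorants_nonempty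
    have hdom (y r : ℝ) (hyr : ϕ y ≤ r) : u < a * y := by simpa using hepi y r hyr
    have hgap : 0 < u - a * s := by linarith
    set l := (|c - (w.2 * s + w.1)| + 1) / (u - a * s)
    have hl : l * (u - a * s) = |c - (w.2 * s + w.1)| + 1 := div_mul_cancel₀ _ hgap.ne'
    refine ⟨_, mem_affineMinorants_of_vertical_separation hw hdom (l := l)
      (div_pos (by positivity) hgap).le, ?_⟩
    nlinarith [le_abs_self (c - (w.2 * s + w.1))]

theorem ProperLscConvex.le_of_forall_mem_affineMinorants (hϕ : ProperLscConvex ϕ) {s c : ℝ}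
    (h : ∀ w ∈ affineMinorants ϕ, w.2 * s + w.1 ≤ c) : ϕ s ≤ c := by
  by_contra hlt
  obtain ⟨w, hw, hcw⟩ := hϕ.exists_mem_affineMinorants_gt hlt
  linarith [h w hw]

end FenchelMoreau

theorem eRec_comp_norm_le {H : Type*} [NormedAddCommGroup H] {ϕ : ℝ → EReal}
    (hϕ : ProperLscConvex ϕ) (heven : ∀ ξ, ϕ (-ξ) = ϕ ξ) {ν : ℝ} (v : H)
    (hslope : ∀ w ∈ affineMinorants ϕ, ‖v‖ * w.2 ≤ ‖v‖ * ν) :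
    eRec (fun v : H => ϕ ‖v‖) v ≤ ((ν * ‖v‖ : ℝ) : EReal) := by
  refine iSup_le fun ⟨y, hy⟩ => ?_
  obtain ⟨r, hr⟩ : ∃ r : ℝ, ϕ ‖y‖ = r := ⟨_, (EReal.coe_toReal hy (hϕ.2.1 _)).symm⟩
  have hvy : ϕ ‖v + y‖ ≤ ((ν * ‖v‖ + r : ℝ) : EReal) := by
    refine hϕ.le_of_forall_mem_affineMinorants fun w hw => ?_
    have habs := mk_mem_affineMinorants_of_abs_le heven hw le_rfl (abs_abs w.2).le
    have hy' : |w.2| * ‖y‖ + w.1 ≤ r := by exact_mod_cast hr ▸ habs ‖y‖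
    have hv' := hslope _ habs
    have h₁ := mul_le_mul_of_nonneg_right (le_abs_self w.2) (norm_nonneg (v + y))
    have h₂ := mul_le_mul_of_nonneg_left (norm_add_le v y) (abs_nonneg w.2)
    dsimp only at hv'
    linarith
  show ϕ ‖v + y‖ - ϕ ‖y‖ ≤ _
  rwa [hr, EReal.sub_le_iff_le_add (by simp) (by simp), ← EReal.coe_add]

section Perspective

variable {H : Type*} [NormedAddCommGroup H] [NormedSpace ℝ H] {ϕ : ℝ → EReal}

theorem exists_norm_eq_and_norm_add_eq [Nontrivial H] (v : H) {s : ℝ} (hs : 0 ≤ s) :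
    ∃ y : H, ‖y‖ = s ∧ ‖v + y‖ = ‖v‖ + s := by
  rcases eq_or_ne v 0 with rfl | hv
  · obtain ⟨y, hy⟩ := exists_norm_eq H hs
    exact ⟨y, hy, by simp [hy]⟩
  · have hy : ‖(s / ‖v‖) • v‖ = s := by
      rw [norm_smul, Real.norm_of_nonneg (by positivity),
        div_mul_cancel₀ _ (norm_ne_zero_iff.2 hv)]
    refine ⟨_, hy, ?_⟩
    rw [(SameRay.sameRay_nonneg_smul_right v (by positivity)).norm_add, hy]

theorem mul_norm_le_eRec_comp_norm [Nontrivial H] (heven : ∀ ξ, ϕ (-ξ) = ϕ ξ)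
    (hdom : ∃ s, ϕ s ≠ ⊤) {χ ν : ℝ} (hmem : (χ, ν) ∈ affineMinorants ϕ) (hν : 0 ≤ ν) (v : H) :
    ((ν * ‖v‖ : ℝ) : EReal) ≤ eRec (fun v : H => ϕ ‖v‖) v := by
  obtain ⟨c, hc⟩ := exists_eConj_eq_coe_of_mem_affineMinorants hdom hmem
  have hFY : (-c, ν) ∈ affineMinorants ϕ :=
    mem_affineMinorants_iff.2 (by rw [hc]; exact_mod_cast (neg_add_cancel c).le)
  refine EReal.ge_of_forall_gt_iff_ge.1 fun z hz => ?_
  have hz' : ((z - ν * ‖v‖ + c : ℝ) : EReal) < eConj ϕ ν := by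
    rw [hc]; exact_mod_cast (by linarith [EReal.coe_lt_coe_iff.1 hz])
  obtain ⟨s, hs⟩ := lt_iSup_iff.1 hz'
  obtain ⟨r, hr⟩ := exists_coe_eq_of_mem_affineMinorants hmem s fun h => by simp [h] at hs
  rw [hr, Real.inner_apply, ← EReal.coe_sub, EReal.coe_lt_coe_iff] at hs
  obtain ⟨y, hy, hvy⟩ := exists_norm_eq_and_norm_add_eq v (abs_nonneg s)
  have hry : ϕ ‖y‖ = r := by rw [hy, apply_abs_of_even heven, hr]
  calc (z : EReal)
      ≤ ((ν * (‖v‖ + |s|) + -c : ℝ) : EReal) - (r : EReal) := by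
        rw [← EReal.coe_sub, EReal.coe_le_coe_iff]
        nlinarith [le_abs_self s]
    _ ≤ ϕ ‖v + y‖ - ϕ ‖y‖ := by rw [hry, hvy]; exact EReal.sub_le_sub (hFY _) le_rfl
    _ ≤ eRec (fun v : H => ϕ ‖v‖) v :=
        le_iSup (fun y : {y : H // ϕ ‖y‖ ≠ ⊤} => ϕ ‖v + y‖ - ϕ ‖(y : H)‖)
          ⟨y, by simp [hry]⟩

lemma persp_of_neg (φ : H → EReal) {τ : ℝ} (hτ : τ < 0) (v : H) : persp φ (τ, v) = ⊤ := by
  simp [persp, hτ.not_gt, hτ.ne]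

lemma persp_zero_s5 (φ : H → EReal) (v : H) : persp φ (0, v) = eRec φ v := by
  simp [persp]

lemma persp_of_pos (φ : H → EReal) {τ : ℝ} (hτ : 0 < τ) (v : H) :
    persp φ (τ, v) = τ * φ (τ⁻¹ • v) := by
  simp [persp, hτ]

lemma norm_inv_smul_of_pos {τ : ℝ} (hτ : 0 < τ) (v : H) : ‖τ⁻¹ • v‖ = ‖v‖ / τ := by
  rw [norm_smul, Real.norm_of_nonneg (inv_nonneg.2 hτ.le), inv_mul_eq_div]

theorem coe_le_persp_comp_norm [Nontrivial H] (heven : ∀ ξ, ϕ (-ξ) = ϕ ξ)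
    (hdom : ∃ s, ϕ s ≠ ⊤) {χ ν : ℝ} (hmem : (χ, ν) ∈ affineMinorants ϕ) (hν : 0 ≤ ν)
    (τ : ℝ) (v : H) :
    ((τ * χ + ν * ‖v‖ : ℝ) : EReal) ≤ persp (fun v : H => ϕ ‖v‖) (τ, v) := by
  rcases lt_trichotomy τ 0 with hτ | rfl | hτ
  · simp [persp_of_neg _ hτ]
  · simpa [persp_zero_s5] using mul_norm_le_eRec_comp_norm heven hdom hmem hν v
  · rw [persp_of_pos _ hτ, norm_inv_smul_of_pos hτ]
    calc ((τ * χ + ν * ‖v‖ : ℝ) : EReal) = τ * ((ν * (‖v‖ / τ) + χ : ℝ) : EReal) := by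
          rw [← EReal.coe_mul]; congr 1; field_simp; ring
      _ ≤ τ * ϕ (‖v‖ / τ) := mul_le_mul_of_nonneg_left (hmem _) (by exact_mod_cast hτ.le)

theorem persp_comp_norm_le (hϕ : ProperLscConvex ϕ) (heven : ∀ ξ, ϕ (-ξ) = ϕ ξ) {τ χ ν : ℝ}
    (hτ : 0 ≤ τ) (v : H)
    (hvi : ∀ w ∈ affineMinorants ϕ, τ * w.1 + ‖v‖ * w.2 ≤ τ * χ + ‖v‖ * ν) :
    persp (fun v : H => ϕ ‖v‖) (τ, v) ≤ ((τ * χ + ν * ‖v‖ : ℝ) : EReal) := by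
  rcases hτ.eq_or_lt with rfl | hτ
  · simpa [persp_zero_s5] using eRec_comp_norm_le hϕ heven v (by simpa using hvi)
  · rw [persp_of_pos _ hτ, norm_inv_smul_of_pos hτ]
    have hϕv : ϕ (‖v‖ / τ) ≤ ((ν * (‖v‖ / τ) + χ : ℝ) : EReal) :=
      hϕ.le_of_forall_mem_affineMinorants fun w hw => by
        refine le_of_mul_le_mul_left ?_ hτ
        field_simp
        linarith [hvi w hw]
    calc (τ : EReal) * ϕ (‖v‖ / τ) ≤ τ * ((ν * (‖v‖ / τ) + χ : ℝ) : EReal) :=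
          mul_le_mul_of_nonneg_left hϕv (by exact_mod_cast hτ.le)
      _ = ((τ * χ + ν * ‖v‖ : ℝ) : EReal) := by
          rw [← EReal.coe_mul]; congr 1; field_simp; ring

theorem persp_comp_norm_eq [Nontrivial H] (hϕ : ProperLscConvex ϕ) (heven : ∀ ξ, ϕ (-ξ) = ϕ ξ)
    {χ ν : ℝ} (hmem : (χ, ν) ∈ affineMinorants ϕ) (hν : 0 ≤ ν) {τ : ℝ} (hτ : 0 ≤ τ) (v : H)
    (hvi : ∀ w ∈ affineMinorants ϕ, τ * w.1 + ‖v‖ * w.2 ≤ τ * χ + ‖v‖ * ν) :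
    persp (fun v : H => ϕ ‖v‖) (τ, v) = ((τ * χ + ν * ‖v‖ : ℝ) : EReal) :=
  le_antisymm (persp_comp_norm_le hϕ heven hτ v hvi) (coe_le_persp_comp_norm heven hϕ.1 hmem hν τ v)

end Perspective

section Prox

variable {H : Type*} [NormedAddCommGroup H] [InnerProductSpace ℝ H]

lemma linear_add_half_sq_dist_eq (p g y : ℝ × H) :
    g.1 * y.1 + ⟪g.2, y.2⟫ + (((p + g).1 - y.1) ^ 2 + ‖(p + g).2 - y.2‖ ^ 2) / 2 =
      g.1 * p.1 + ⟪g.2, p.2⟫ + (g.1 ^ 2 + ‖g.2‖ ^ 2) / 2 +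
        ((y.1 - p.1) ^ 2 + ‖y.2 - p.2‖ ^ 2) / 2 := by
  rw [Prod.fst_add, Prod.snd_add, show p.2 + g.2 - y.2 = g.2 - (y.2 - p.2) by abel,
    norm_sub_sq_real, inner_sub_right]
  ring

theorem isProx_add_iff {Ψ : ℝ × H → EReal} {p g : ℝ × H}
    (hle : ∀ y : ℝ × H, ((g.1 * y.1 + ⟪g.2, y.2⟫ : ℝ) : EReal) ≤ Ψ y)
    (hp : Ψ p = ((g.1 * p.1 + ⟪g.2, p.2⟫ : ℝ) : EReal)) (q : ℝ × H) :
    IsProx Ψ (p + g) q ↔ q = p := by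
  set m := g.1 * p.1 + ⟪g.2, p.2⟫ + (g.1 ^ 2 + ‖g.2‖ ^ 2) / 2
  have hgrowth (y : ℝ × H) : ((m + ((y.1 - p.1) ^ 2 + ‖y.2 - p.2‖ ^ 2) / 2 : ℝ) : EReal) ≤
      Ψ y + ((((p + g).1 - y.1) ^ 2 + ‖(p + g).2 - y.2‖ ^ 2) / 2 : ℝ) := by
    rw [← linear_add_half_sq_dist_eq, EReal.coe_add]
    exact add_le_add (hle y) le_rfl
  have hmin : Ψ p + ((((p + g).1 - p.1) ^ 2 + ‖(p + g).2 - p.2‖ ^ 2) / 2 : ℝ) = (m : EReal) := by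
    rw [hp, ← EReal.coe_add, linear_add_half_sq_dist_eq]
    congr 1
    simp [m]
  constructor
  · intro hq
    have hle' := (hgrowth q).trans ((hq p).trans hmin.le)
    rw [EReal.coe_le_coe_iff] at hle'
    have hsq : (q.1 - p.1) ^ 2 + ‖q.2 - p.2‖ ^ 2 = 0 := le_antisymm (by linarith) (by positivity)
    obtain ⟨h₁, h₂⟩ := (add_eq_zero_iff_of_nonneg (sq_nonneg _) (sq_nonneg _)).1 hsq
    exact Prod.ext (sub_eq_zero.1 (pow_eq_zero_iff two_ne_zero |>.1 h₁))
      (norm_sub_eq_zero_iff.1 (pow_eq_zero_iff two_ne_zero |>.1 h₂))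
  · rintro rfl y
    refine hmin.le.trans (le_trans ?_ (hgrowth y))
    exact_mod_cast le_add_of_nonneg_right (by positivity)

theorem inner_add_le_smul_persp_comp_norm [Nontrivial H] {ϕ : ℝ → EReal}
    (heven : ∀ ξ, ϕ (-ξ) = ϕ ξ) (hdom : ∃ s, ϕ s ≠ ⊤) {χ ν : ℝ}
    (hmem : (χ, ν) ∈ affineMinorants ϕ) (hν : 0 ≤ ν) {γ : ℝ} (hγ : 0 ≤ γ) (x : H) (τ : ℝ)
    (v : H) :
    ((γ * χ * τ + ⟪(γ * ν / ‖x‖) • x, v⟫ : ℝ) : EReal) ≤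
      γ * persp (fun v : H => ϕ ‖v‖) (τ, v) := by
  have hcs : ⟪(γ * ν / ‖x‖) • x, v⟫ ≤ γ * ν * ‖v‖ :=
    calc ⟪(γ * ν / ‖x‖) • x, v⟫ ≤ γ * ν / ‖x‖ * (‖x‖ * ‖v‖) := by
          rw [real_inner_smul_left]
          exact mul_le_mul_of_nonneg_left (real_inner_le_norm x v) (by positivity)
      _ = γ * ν * ‖v‖ * (‖x‖ / ‖x‖) := by ring
      _ ≤ γ * ν * ‖v‖ := mul_le_of_le_one_right (by positivity) (div_self_le_one _)
  calc ((γ * χ * τ + ⟪(γ * ν / ‖x‖) • x, v⟫ : ℝ) : EReal)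
      ≤ ((γ * (τ * χ + ν * ‖v‖) : ℝ) : EReal) := by exact_mod_cast (by nlinarith)
    _ = γ * ((τ * χ + ν * ‖v‖ : ℝ) : EReal) := EReal.coe_mul _ _
    _ ≤ γ * persp (fun v : H => ϕ ‖v‖) (τ, v) :=
        mul_le_mul_of_nonneg_left (coe_le_persp_comp_norm heven hdom hmem hν τ v)
          (by exact_mod_cast hγ)

end Prox

theorem radial_perspective_prox_via_projection_general
    {H : Type*} [NormedAddCommGroup H] [InnerProductSpace ℝ H]
    (ϕ : ℝ → EReal) (heven : ∀ ξ : ℝ, ϕ (-ξ) = ϕ ξ) (hϕ : ProperLscConvex ϕ)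
    (γ : ℝ) (hγ : 0 < γ) (σ : ℝ) (x : H) (hx : x ≠ 0)
    (χ ν : ℝ)
    (hmem : (χ : EReal) + eConj ϕ ν ≤ 0)
    (hproj : ∀ w : ℝ × ℝ, (w.1 : EReal) + eConj ϕ w.2 ≤ 0 →
      (σ / γ - χ) ^ 2 + (‖x‖ / γ - ν) ^ 2 ≤
        (σ / γ - w.1) ^ 2 + (‖x‖ / γ - w.2) ^ 2) :
    ∀ p : ℝ × H,
      IsProx (fun q => (γ : EReal) * persp (fun v : H => ϕ ‖v‖) q) (σ, x) p ↔
        p = (σ - γ * χ, (1 - γ * ν / ‖x‖) • x) := by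
  have : Nontrivial H := ⟨⟨x, 0, hx⟩⟩
  have hx' : 0 < ‖x‖ := norm_pos_iff.2 hx
  have hR : (χ, ν) ∈ affineMinorants ϕ := mem_affineMinorants_iff.2 hmem
  have hvi := convex_affineMinorants.variational_ineq_of_forall_sq_dist_le hR
    (a := (σ / γ, ‖x‖ / γ)) fun w hw => hproj w (mem_affineMinorants_iff.1 hw)
  obtain ⟨hχ, hν, hνx⟩ :=
    bounds_of_variational_ineq (a₁ := σ / γ) (a₂ := ‖x‖ / γ) heven (by positivity) hR hvi
  have hσ : σ - γ * χ = γ * (σ / γ - χ) := by field_simp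
  have hu : ‖(1 - γ * ν / ‖x‖) • x‖ = γ * (‖x‖ / γ - ν) := by
    rw [norm_smul, Real.norm_of_nonneg (by
      rw [sub_nonneg, div_le_one hx', mul_comm, ← le_div_iff₀ hγ]; exact hνx)]
    field_simp
  have hvalue := persp_comp_norm_eq hϕ heven hR hν (τ := σ - γ * χ)
    (hσ ▸ mul_nonneg hγ.le (sub_nonneg.2 hχ)) ((1 - γ * ν / ‖x‖) • x) fun w hw => by
      rw [hσ, hu]
      nlinarith [mul_le_mul_of_nonneg_left (hvi w hw) hγ.le]
  intro p
  rw [show ((σ, x) : ℝ × H) = (σ - γ * χ, (1 - γ * ν / ‖x‖) • x) + (γ * χ, (γ * ν / ‖x‖) • x) by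
    ext <;> simp [sub_smul]]
  refine isProx_add_iff (fun y => inner_add_le_smul_persp_comp_norm heven hϕ.1 hR hν hγ.le x
    y.1 y.2) ?_ p
  rw [hvalue, ← EReal.coe_mul, real_inner_smul_left, real_inner_smul_right,
    real_inner_self_eq_norm_sq, hu]
  congr 1
  field_simp

/-- For even `ϕ ∈ Γ₀(ℝ)`, `φ = ϕ ∘ ‖·‖`, `x ≠ 0` with `σ + γϕ*(‖x‖/γ) > 0`, if
`(χ,ν)` is the Euclidean projection of `(σ/γ, ‖x‖/γ)` onto
`R = {(χ,ν) : χ + ϕ*(ν) ≤ 0}`, then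
`prox_{γφ̃}(σ,x) = (σ − γχ, (1 − γν/‖x‖) x)`. -/
theorem radial_perspective_prox_via_projection
    {H : Type*} [NormedAddCommGroup H] [InnerProductSpace ℝ H] [CompleteSpace H]
    (ϕ : ℝ → EReal) (heven : ∀ ξ : ℝ, ϕ (-ξ) = ϕ ξ) (hϕ : ProperLscConvex ϕ)
    (γ : ℝ) (hγ : 0 < γ) (σ : ℝ) (x : H) (hx : x ≠ 0)
    (h : 0 < (σ : EReal) + (γ : EReal) * eConj ϕ (‖x‖ / γ))
    (χ ν : ℝ)
    (hmem : (χ : EReal) + eConj ϕ ν ≤ 0)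
    (hproj : ∀ w : ℝ × ℝ, (w.1 : EReal) + eConj ϕ w.2 ≤ 0 →
      (σ / γ - χ) ^ 2 + (‖x‖ / γ - ν) ^ 2 ≤
        (σ / γ - w.1) ^ 2 + (‖x‖ / γ - w.2) ^ 2) :
    ∀ p : ℝ × H,
      IsProx (fun q => (γ : EReal) * persp (fun v : H => ϕ ‖v‖) q) (σ, x) p ↔
        p = (σ - γ * χ, (1 - γ * ν / ‖x‖) • x) :=
  radial_perspective_prox_via_projection_general ϕ heven hϕ γ hγ σ x hx χ ν hmem hproj
end
end

section
/- Let H be a real Hilbert space, let α > 0, ρ > 0, q > 1, set q* = q/(q−1), and define φ : H → ℝ by φ(x) = α − ρ^{q*}/q* + ρ‖x‖ if ‖x‖ > ρ^{q*/q}, and φ(x) = α + ‖x‖^q/q if ‖x‖ ≤ ρ^{q*/q}. Then for all σ ∈ ℝ and x ∈ H, the perspective satisfies: φ̃(σ,x) = (α − ρ^{q*}/q*)σ + ρ‖x‖ if σ > 0 and ‖x‖ > σρ^{q*/q}; φ̃(σ,x) = ασ + ‖x‖^q/(qσ^{q−1}) if σ > 0 and ‖x‖ ≤ σρ^{q*/q};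 φ̃(0,x) = ρ‖x‖; and φ̃(σ,x) = +∞ if σ < 0. -/
noncomputable section

/-- The perspective of a (finite-valued) function `φ : H → ℝ`: it equals
`σ φ(x/σ)` for `σ > 0`, the recession function
`(rec φ)(x) = sup_y (φ(x+y) − φ(y))` for `σ = 0`, and `+∞` for `σ < 0`. -/
def perspR {H : Type*} [NormedAddCommGroup H] [NormedSpace ℝ H]
    (φ : H → ℝ) (p : ℝ × H) : EReal :=
  if 0 < p.1 then ((p.1 * φ (p.1⁻¹ • p.2) : ℝ) : EReal)
  else if p.1 = 0 then ⨆ y : H, ((φ (p.2 + y) - φ y : ℝ) : EReal)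
  else ⊤

/-!
Write `r = ρ^(q*/q)`, so that `r^(q-1) = ρ` and `r^q = ρ r = ρ^q*`. Then `φ = α + h(‖·‖)`, where
`h` is `t ↦ t^q/q` on `[0, r]` continued by its tangent line at `r`, of slope `ρ`.

For `σ > 0` the formulas are `σ φ(x/σ)` evaluated on each branch. For `σ = 0`, Bernoulli's
inequality `b^q - a^q ≤ q b^(q-1) (b - a)` shows that `h` is nondecreasing with slopes at most `ρ`,
so `φ` is `ρ`-Lipschitz and `φ(x + y) - φ(y) ≤ ρ‖x‖`; taking `y = t x` with `t` large puts both
points on the affine part of `h`, where the difference is exactly `ρ‖x‖`.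
-/

theorem rpow_sub_rpow_le_mul_rpow_sub {a b q : ℝ} (hq : 1 ≤ q) (ha : 0 ≤ a) (hab : a ≤ b) :
    b ^ q - a ^ q ≤ q * b ^ (q - 1) * (b - a) := by
  rcases (ha.trans hab).eq_or_lt with hb | hb
  · obtain rfl : a = 0 := le_antisymm (hab.trans hb.ge) ha
    simp [← hb]
  have bern := one_add_mul_self_le_rpow_one_add (s := a / b - 1)
    (by linarith [div_nonneg ha hb.le]) hq
  rw [add_sub_cancel, Real.div_rpow ha hb.le, le_div_iff₀ (by positivity)] at bern
  have : q * b ^ (q - 1) * (b - a) = -(q * (a / b - 1) * b ^ q) := by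
    rw [Real.rpow_sub_one hb.ne']
    field_simp
    ring
  linarith

def powTangent (q r t : ℝ) : ℝ :=
  if t ≤ r then t ^ q / q else r ^ q / q + r ^ (q - 1) * (t - r)

section powTangent

variable {q r : ℝ}

theorem powTangent_sub_mem_Icc (hq : 1 ≤ q) (hr : 0 ≤ r) {a b : ℝ} (ha : 0 ≤ a) (hab : a ≤ b) :
    powTangent q r b - powTangent q r a ∈ Set.Icc 0 (r ^ (q - 1) * (b - a)) := by
  have hq0 : 0 < q := zero_lt_one.trans_le hq
  have hpow {s t : ℝ} (hs : 0 ≤ s) (hst : s ≤ t) :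
      t ^ q / q - s ^ q / q ∈ Set.Icc 0 (t ^ (q - 1) * (t - s)) := by
    have := rpow_sub_rpow_le_mul_rpow_sub hq hs hst
    have := Real.rpow_le_rpow hs hst hq0.le
    constructor
    · rw [sub_nonneg]; gcongr
    · rw [← sub_div, div_le_iff₀ hq0]; linarith
  have hslope : 0 ≤ r ^ (q - 1) := Real.rpow_nonneg hr _
  unfold powTangent
  split_ifs with hb ha' ha'
  · obtain ⟨h₀, h₁⟩ := hpow ha hab
    have : b ^ (q - 1) ≤ r ^ (q - 1) := Real.rpow_le_rpow (ha.trans hab) hb (by linarith)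
    exact ⟨h₀, h₁.trans (by gcongr)⟩
  · exact absurd (hab.trans hb) ha'
  · obtain ⟨h₀, h₁⟩ := hpow ha ha'
    constructor <;> nlinarith
  · constructor <;> nlinarith

theorem abs_powTangent_sub_le (hq : 1 ≤ q) (hr : 0 ≤ r) {a b : ℝ} (ha : 0 ≤ a) (hb : 0 ≤ b) :
    |powTangent q r b - powTangent q r a| ≤ r ^ (q - 1) * |b - a| := by
  rcases le_total a b with hab | hba
  · obtain ⟨h₀, h₁⟩ := powTangent_sub_mem_Icc hq hr ha hab
    rwa [abs_of_nonneg h₀, abs_of_nonneg (sub_nonneg.2 hab)]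
  · obtain ⟨h₀, h₁⟩ := powTangent_sub_mem_Icc hq hr hb hba
    rwa [abs_sub_comm, abs_of_nonneg h₀, abs_sub_comm, abs_of_nonneg (sub_nonneg.2 hba)]

theorem powTangent_of_lt {t : ℝ} (ht : r < t) :
    powTangent q r t = (r ^ q / q - r ^ (q - 1) * r) + r ^ (q - 1) * t := by
  rw [powTangent, if_neg ht.not_ge]
  ring

end powTangent

theorem perspR_of_neg {H : Type*} [NormedAddCommGroup H] [NormedSpace ℝ H]
    (φ : H → ℝ) {σ : ℝ} (hσ : σ < 0) (x : H) : perspR φ (σ, x) = ⊤ := by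
  simp [perspR, hσ.not_gt, hσ.ne]

section Radial

variable {E : Type*} [NormedAddCommGroup E] [NormedSpace ℝ E] (G : ℝ → ℝ)

theorem perspR_radial_of_pos {σ : ℝ} (hσ : 0 < σ) (x : E) :
    perspR (fun v => G ‖v‖) (σ, x) = ((σ * G (‖x‖ / σ) : ℝ) : EReal) := by
  simp [perspR, hσ, norm_smul, abs_of_pos hσ, div_eq_inv_mul]

theorem perspR_radial_zero {L r c : ℝ}
    (hLip : ∀ a b, 0 ≤ a → 0 ≤ b → |G b - G a| ≤ L * |b - a|)
    (hAff : ∀ t, r < t → G t = c + L * t) (x : E) :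
    perspR (fun v => G ‖v‖) (0, x) = ((L * ‖x‖ : ℝ) : EReal) := by
  have hL : 0 ≤ L := by simpa using (abs_nonneg _).trans (hLip 0 1 le_rfl zero_le_one)
  simp only [perspR, lt_irrefl, if_false, if_true]
  refine le_antisymm (iSup_le fun y => EReal.coe_le_coe_iff.2 ?_) ?_
  · calc G ‖x + y‖ - G ‖y‖ ≤ L * |‖x + y‖ - ‖y‖| :=
          (le_abs_self _).trans (hLip _ _ (norm_nonneg _) (norm_nonneg _))
      _ ≤ L * ‖x‖ := by
        gcongr
        simpa using abs_norm_sub_norm_le (x + y) y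
  rcases eq_or_ne x 0 with rfl | hx
  · exact le_iSup_of_le 0 (by simp)
  have hx' := norm_pos_iff.2 hx
  obtain ⟨t, ht, hrt⟩ : ∃ t : ℝ, 0 < t ∧ r < t * ‖x‖ :=
    ⟨(|r| + 1) / ‖x‖, by positivity, by rw [div_mul_cancel₀ _ hx'.ne']; linarith [le_abs_self r]⟩
  refine le_iSup_of_le (t • x) (EReal.coe_le_coe_iff.2 (le_of_eq ?_))
  rw [show x + t • x = (1 + t) • x by module, norm_smul, norm_smul, Real.norm_of_nonneg ht.le,
    Real.norm_of_nonneg (by positivity), hAff _ hrt, hAff _ (by nlinarith)]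
  ring

end Radial

theorem rpow_conj_div_rpow_sub_one {ρ q qs : ℝ} (hρ : 0 ≤ ρ) (hq : 1 < q) (hqs : qs = q / (q - 1)) :
    (ρ ^ (qs / q)) ^ (q - 1) = ρ := by
  rw [← Real.rpow_mul hρ, hqs, div_div_cancel_left' (by linarith), inv_mul_cancel₀ (by linarith),
    Real.rpow_one]

theorem huber_eq_add_powTangent {ρ q qs : ℝ} (hρ : 0 < ρ) (hq : 1 < q) (hqs : qs = q / (q - 1))
    (α t : ℝ) :
    (if t ≤ ρ ^ (qs / q) then α + t ^ q / q else α - ρ ^ qs / qs + ρ * t) =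
      α + powTangent q (ρ ^ (qs / q)) t := by
  set r := ρ ^ (qs / q)
  have hr : 0 < r := by positivity
  have hslope : r ^ (q - 1) = ρ := rpow_conj_div_rpow_sub_one hρ.le hq hqs
  have hrq : r ^ q = ρ * r := by rw [← hslope, Real.rpow_sub_one hr.ne', div_mul_cancel₀ _ hr.ne']
  have hρqs : ρ ^ qs = ρ * r := by
    have hexp : qs = 1 + qs / q := by
      rw [hqs]
      field_simp [show q - 1 ≠ 0 by linarith]
      ring
    calc ρ ^ qs = ρ ^ (1 + qs / q) := by rw [← hexp]
      _ = ρ * r := by rw [Real.rpow_add hρ, Real.rpow_one]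
  unfold powTangent
  split_ifs
  · rfl
  · rw [hslope, hrq, hρqs, hqs]
    field_simp
    ring

theorem generalized_huber_perspective_general
    {H : Type*} [NormedAddCommGroup H] [InnerProductSpace ℝ H]
    (α ρ q : ℝ) (hρ : 0 < ρ) (hq : 1 < q)
    (qs : ℝ) (hqs : qs = q / (q - 1))
    (φ : H → ℝ)
    (hφ : ∀ v : H, φ v =
      if ‖v‖ ≤ ρ ^ (qs / q) then α + ‖v‖ ^ q / q
      else α - ρ ^ qs / qs + ρ * ‖v‖) :
    ∀ σ : ℝ, ∀ x : H,
      (0 < σ → σ * ρ ^ (qs / q) < ‖x‖ →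
        perspR φ (σ, x) = (((α - ρ ^ qs / qs) * σ + ρ * ‖x‖ : ℝ) : EReal)) ∧
      (0 < σ → ‖x‖ ≤ σ * ρ ^ (qs / q) →
        perspR φ (σ, x) = ((α * σ + ‖x‖ ^ q / (q * σ ^ (q - 1)) : ℝ) : EReal)) ∧
      (σ = 0 → perspR φ (σ, x) = ((ρ * ‖x‖ : ℝ) : EReal)) ∧
      (σ < 0 → perspR φ (σ, x) = (⊤ : EReal)) := by
  intro σ x
  set G : ℝ → ℝ := fun t =>
    if t ≤ ρ ^ (qs / q) then α + t ^ q / q else α - ρ ^ qs / qs + ρ * t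
  obtain rfl : φ = fun v => G ‖v‖ := funext hφ
  refine ⟨fun hσ hx => ?_, fun hσ hx => ?_, fun hσ => ?_, fun hσ => perspR_of_neg _ hσ x⟩
  · rw [perspR_radial_of_pos G hσ]
    dsimp only [G]
    rw [if_neg (by rw [not_le, lt_div_iff₀ hσ]; linarith)]
    congr 1
    field_simp
  · rw [perspR_radial_of_pos G hσ]
    dsimp only [G]
    rw [if_pos (by rw [div_le_iff₀ hσ]; linarith),
      Real.div_rpow (norm_nonneg _) hσ.le, Real.rpow_sub_one hσ.ne']
    congr 1
    field_simp
  · subst hσ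
    set r := ρ ^ (qs / q)
    have hslope : r ^ (q - 1) = ρ := rpow_conj_div_rpow_sub_one hρ.le hq hqs
    set G' : ℝ → ℝ := fun t => α + powTangent q r t
    rw [show G = G' from funext (huber_eq_add_powTangent hρ hq hqs α)]
    refine perspR_radial_zero G' (r := r) (c := α + (r ^ q / q - ρ * r))
      (fun a b ha hb => ?_) (fun t ht => ?_) x
    · simpa [G', hslope] using abs_powTangent_sub_le hq.le (by positivity : 0 ≤ r) ha hb
    · simp only [G', powTangent_of_lt ht, hslope, add_assoc]

/-- The perspective of the generalized Huber function. -/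
theorem generalized_huber_perspective
    {H : Type*} [NormedAddCommGroup H] [InnerProductSpace ℝ H] [CompleteSpace H]
    (α ρ q : ℝ) (hα : 0 < α) (hρ : 0 < ρ) (hq : 1 < q)
    (qs : ℝ) (hqs : qs = q / (q - 1))
    (φ : H → ℝ)
    (hφ : ∀ v : H, φ v =
      if ‖v‖ ≤ ρ ^ (qs / q) then α + ‖v‖ ^ q / q
      else α - ρ ^ qs / qs + ρ * ‖v‖) :
    ∀ σ : ℝ, ∀ x : H,
      (0 < σ → σ * ρ ^ (qs / q) < ‖x‖ →
        perspR φ (σ, x) = (((α - ρ ^ qs / qs) * σ + ρ * ‖x‖ : ℝ) : EReal)) ∧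
      (0 < σ → ‖x‖ ≤ σ * ρ ^ (qs / q) →
        perspR φ (σ, x) = ((α * σ + ‖x‖ ^ q / (q * σ ^ (q - 1)) : ℝ) : EReal)) ∧
      (σ = 0 → perspR φ (σ, x) = ((ρ * ‖x‖ : ℝ) : EReal)) ∧
      (σ < 0 → perspR φ (σ, x) = (⊤ : EReal)) :=
  generalized_huber_perspective_general α ρ q hρ hq qs hqs φ hφ
end
end

section
/- Let H be a real Hilbert space, let α > 0, γ > 0, ρ > 0, q > 1, set q* = q/(q−1), and let φ be the generalized Huber function φ(x) = α − ρ^{q*}/q* + ρ‖x‖ if ‖x‖ > ρ^{q*/q}, φ(x) = α + ‖x‖^q/q if ‖x‖ ≤ ρ^{q*/q}. Let σ ∈ ℝ and x ∈ H. If ‖x‖ ≤ γρ and ‖x‖^{q*} ≤ γ^{q*} q* (α − σ/γ), then prox_{γφ̃}(σ,x) = (0,0). -/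
/-!
The point `(0, 0)` is the proximal point of `ψ = γ φ̃` at `z = (σ, x)` as soon as `ψ (0, 0) = 0`
and `z` is a subgradient of `ψ` at the origin, i.e. `ψ (τ, u) ≥ σ τ + ⟪x, u⟫`: expanding the
square then gives `ψ w + ½‖z - w‖² ≥ ½‖z‖² + ½‖w‖²`, with equality only at `w = 0`.
By positive homogeneity of the perspective, the subgradient inequality reduces to
`σ + ⟪x, v⟫ ≤ γ φ v` for `τ > 0` and to `⟪x, u⟫ ≤ γ (rec φ) u` for `τ = 0`. With `b = ‖x‖ / γ ≤ ρ`,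
Cauchy–Schwarz and Young's inequality give `⟪x, v⟫ ≤ γ (φ v - α + b ^ q* / q*)`, and the second
hypothesis is exactly `γ (b ^ q* / q*) ≤ γ α - σ`. For `τ = 0`, `rec φ ≥ ρ ‖·‖` because `φ` grows
with slope `ρ` at infinity, and `⟪x, u⟫ ≤ γ ρ ‖u‖` by the first hypothesis.
-/

noncomputable section

open RealInnerProductSpace

lemma sq_add_norm_sq_pos {H : Type*} [NormedAddCommGroup H] {w : ℝ × H} (hw : w ≠ (0, 0)) :
    0 < w.1 ^ 2 + ‖w.2‖ ^ 2 := by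
  by_contra! hle
  have h1 : w.1 = 0 := by nlinarith [sq_nonneg w.1, sq_nonneg ‖w.2‖]
  have h2 : w.2 = 0 := by
    rw [← norm_eq_zero]; nlinarith [sq_nonneg w.1, norm_nonneg w.2]
  exact hw (Prod.ext h1 h2)

section Subgradient

variable {H : Type*} [NormedAddCommGroup H] [InnerProductSpace ℝ H]

lemma isProx_iff_eq_zero_of_inner_le {ψ : ℝ × H → EReal} {σ : ℝ} {x : H} (hψ0 : ψ (0, 0) = 0)
    (hψ : ∀ w : ℝ × H, ((σ * w.1 + ⟪x, w.2⟫ : ℝ) : EReal) ≤ ψ w) (p : ℝ × H) :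
    IsProx ψ (σ, x) p ↔ p = (0, 0) := by
  have hzero : ψ (0, 0) + ((((σ - (0, (0 : H)).1) ^ 2 + ‖x - (0, (0 : H)).2‖ ^ 2) / 2 : ℝ) :
      EReal) = (((σ ^ 2 + ‖x‖ ^ 2) / 2 : ℝ) : EReal) := by
    simp [hψ0]
  have hstrict : ∀ w : ℝ × H, w ≠ (0, 0) → (((σ ^ 2 + ‖x‖ ^ 2) / 2 : ℝ) : EReal) <
      ψ w + ((((σ - w.1) ^ 2 + ‖x - w.2‖ ^ 2) / 2 : ℝ) : EReal) := by
    intro w hw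
    have hreal : (σ ^ 2 + ‖x‖ ^ 2) / 2 <
        (σ * w.1 + ⟪x, w.2⟫) + ((σ - w.1) ^ 2 + ‖x - w.2‖ ^ 2) / 2 := by
      rw [norm_sub_sq_real]
      linarith [sq_add_norm_sq_pos hw]
    calc (((σ ^ 2 + ‖x‖ ^ 2) / 2 : ℝ) : EReal)
        < ((σ * w.1 + ⟪x, w.2⟫ : ℝ) : EReal) +
            ((((σ - w.1) ^ 2 + ‖x - w.2‖ ^ 2) / 2 : ℝ) : EReal) := by
          exact_mod_cast hreal
      _ ≤ _ := add_le_add_left (hψ w) _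
  constructor
  · intro hp
    by_contra hne
    exact (hstrict p hne).not_ge (hzero ▸ hp (0, 0))
  · rintro rfl y
    rw [hzero]
    rcases eq_or_ne y (0, 0) with rfl | hy
    · exact hzero.ge
    · exact (hstrict y hy).le

lemma perspR_zero (φ : H → ℝ) : perspR φ (0, 0) = 0 := by
  simp [perspR]

lemma inner_le_mul_perspR {φ : H → ℝ} {γ σ : ℝ} {x : H} (hγ : 0 < γ)
    (hφ : ∀ v, σ + ⟪x, v⟫ ≤ γ * φ v)
    (hrec : ∀ u, ((⟪x, u⟫ : ℝ) : EReal) ≤ γ * ⨆ y : H, ((φ (u + y) - φ y : ℝ) : EReal))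
    (w : ℝ × H) : ((σ * w.1 + ⟪x, w.2⟫ : ℝ) : EReal) ≤ γ * perspR φ w := by
  obtain ⟨τ, u⟩ := w
  rcases lt_trichotomy τ 0 with hτ | rfl | hτ
  · simp [perspR, hτ.not_gt, hτ.ne, EReal.coe_mul_top_of_pos hγ]
  · simpa [perspR] using hrec u
  · have hv := mul_le_mul_of_nonneg_left (hφ (τ⁻¹ • u)) hτ.le
    rw [inner_smul_right, mul_add, mul_inv_cancel_left₀ hτ.ne'] at hv
    simp only [perspR, if_pos hτ, ← EReal.coe_mul, EReal.coe_le_coe_iff]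
    linarith

end Subgradient

section Huber

def huberProfile (α ρ q qs t : ℝ) : ℝ :=
  if t ≤ ρ ^ (qs / q) then α + t ^ q / q else α - ρ ^ qs / qs + ρ * t

variable {α ρ q qs : ℝ}

lemma huberProfile_of_lt {t : ℝ} (ht : ρ ^ (qs / q) < t) :
    huberProfile α ρ q qs t = α - ρ ^ qs / qs + ρ * t :=
  if_neg ht.not_ge

/-- Fenchel–Young for the profile: its conjugate at `b ∈ [0, ρ]` is `b ^ q* / q* - α`. -/
lemma mul_le_huberProfile_sub_add {b t : ℝ} (hq : q.HolderConjugate qs) (hb : 0 ≤ b)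
    (hbρ : b ≤ ρ) (ht : 0 ≤ t) : b * t ≤ huberProfile α ρ q qs t - α + b ^ qs / qs := by
  unfold huberProfile
  split_ifs with htr
  · linarith [Real.young_inequality_of_nonneg ht hb hq]
  · push Not at htr
    set r := ρ ^ (qs / q)
    have hρ : 0 ≤ ρ := hb.trans hbρ
    -- On the affine branch, use Young's inequality at the kink `r`, where `r ^ q = ρ r = ρ ^ q*`.
    have hrq : r ^ q = ρ ^ qs := by
      rw [← Real.rpow_mul hρ, div_mul_cancel₀ _ hq.ne_zero]
    have hexp : 1 + qs / q = qs := by rw [hq.symm.div_conj_eq_sub_one]; ring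
    have hρr : ρ * r = ρ ^ qs := by
      rw [← Real.rpow_one_add' (y := qs / q) hρ (by rw [hexp]; exact hq.symm.ne_zero), hexp]
    have hyoung := Real.young_inequality_of_nonneg (Real.rpow_nonneg hρ (qs / q)) hb hq
    have hsum : ρ ^ qs / q + ρ ^ qs / qs = ρ ^ qs := by
      rw [div_eq_mul_inv, div_eq_mul_inv, ← mul_add, hq.inv_add_inv_eq_one, mul_one]
    rw [hrq] at hyoung
    linarith [mul_le_mul_of_nonneg_left htr.le (sub_nonneg.2 hbρ)]

variable {H : Type*} [NormedAddCommGroup H] [InnerProductSpace ℝ H]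

lemma add_inner_le_mul_huberProfile {γ σ : ℝ} {x : H} (hγ : 0 < γ) (hq : q.HolderConjugate qs)
    (h1 : ‖x‖ ≤ γ * ρ) (h2 : ‖x‖ ^ qs ≤ γ ^ qs * qs * (α - σ / γ)) (v : H) :
    σ + ⟪x, v⟫ ≤ γ * huberProfile α ρ q qs ‖v‖ := by
  set b := ‖x‖ / γ
  have hb : 0 ≤ b := div_nonneg (norm_nonneg x) hγ.le
  have hbρ : b ≤ ρ := (div_le_iff₀' hγ).2 h1
  have hxb : ‖x‖ = γ * b := (mul_div_cancel₀ _ hγ.ne').symm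
  have hbqs : γ * (b ^ qs / qs) ≤ γ * α - σ := by
    have hb' : b ^ qs / qs ≤ α - σ / γ := by
      rw [Real.div_rpow (norm_nonneg x) hγ.le, div_div,
        div_le_iff₀ (mul_pos (Real.rpow_pos_of_pos hγ qs) hq.symm.pos)]
      linarith
    calc γ * (b ^ qs / qs) ≤ γ * (α - σ / γ) := mul_le_mul_of_nonneg_left hb' hγ.le
      _ = γ * α - σ := by field_simp
  have hyoung := mul_le_mul_of_nonneg_left
    (mul_le_huberProfile_sub_add (α := α) hq hb hbρ (norm_nonneg v)) hγ.le
  have hcs : ⟪x, v⟫ ≤ γ * b * ‖v‖ := hxb ▸ real_inner_le_norm x v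
  linarith

/-- The profile has slope `ρ` at infinity: compare two points far out on the ray through `u`. -/
lemma mul_norm_le_iSup_huberProfile_sub (u : H) :
    ((ρ * ‖u‖ : ℝ) : EReal) ≤
      ⨆ y : H, ((huberProfile α ρ q qs ‖u + y‖ - huberProfile α ρ q qs ‖y‖ : ℝ) : EReal) := by
  rcases eq_or_ne u 0 with rfl | hu
  · exact le_iSup_of_le 0 (by simp)
  set s := |ρ ^ (qs / q)| / ‖u‖ + 1 with hs_def
  refine le_iSup_of_le (s • u) (le_of_eq ?_)
  have hu' : 0 < ‖u‖ := norm_pos_iff.2 hu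
  have hs : 0 < s := by positivity
  have hy : ‖s • u‖ = |ρ ^ (qs / q)| + ‖u‖ := by
    rw [norm_smul, Real.norm_of_nonneg hs.le, hs_def]; field_simp
  have huy : ‖u + s • u‖ = |ρ ^ (qs / q)| + 2 * ‖u‖ := by
    rw [show u + s • u = (1 + s) • u by module, norm_smul, Real.norm_of_nonneg (by positivity),
      hs_def]
    field_simp; ring
  have hr := le_abs_self (ρ ^ (qs / q))
  rw [hy, huy, huberProfile_of_lt (by linarith), huberProfile_of_lt (by linarith)]
  norm_cast; ring

end Huber

theorem prox_generalized_huber_zero_general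
    {H : Type*} [NormedAddCommGroup H] [InnerProductSpace ℝ H]
    (α γ ρ q : ℝ) (hγ : 0 < γ) (hq : 1 < q)
    (qs : ℝ) (hqs : qs = q / (q - 1))
    (φ : H → ℝ)
    (hφ : ∀ v : H, φ v =
      if ‖v‖ ≤ ρ ^ (qs / q) then α + ‖v‖ ^ q / q
      else α - ρ ^ qs / qs + ρ * ‖v‖)
    (σ : ℝ) (x : H)
    (h1 : ‖x‖ ≤ γ * ρ)
    (h2 : ‖x‖ ^ qs ≤ γ ^ qs * qs * (α - σ / γ)) :
    ∀ p : ℝ × H,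
      IsProx (fun w => (γ : EReal) * perspR φ w) (σ, x) p ↔ p = (0, 0) := by
  obtain rfl : φ = fun v => huberProfile α ρ q qs ‖v‖ := funext hφ
  have hconj : q.HolderConjugate qs := (Real.holderConjugate_iff_eq_conjExponent hq).2 hqs
  refine isProx_iff_eq_zero_of_inner_le (by rw [perspR_zero, mul_zero]) (inner_le_mul_perspR hγ
    (add_inner_le_mul_huberProfile hγ hconj h1 h2) fun u => ?_)
  calc ((⟪x, u⟫ : ℝ) : EReal) ≤ ((γ * (ρ * ‖u‖) : ℝ) : EReal) := by
        refine EReal.coe_le_coe_iff.2 ((real_inner_le_norm x u).trans ?_)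
        rw [← mul_assoc]; exact mul_le_mul_of_nonneg_right h1 (norm_nonneg u)
    _ ≤ _ := by
        rw [EReal.coe_mul]
        exact mul_le_mul_of_nonneg_left (mul_norm_le_iSup_huberProfile_sub u)
          (EReal.coe_nonneg.2 hγ.le)

/-- Prox of the perspective of the generalized Huber function: zero case. -/
theorem prox_generalized_huber_zero
    {H : Type*} [NormedAddCommGroup H] [InnerProductSpace ℝ H] [CompleteSpace H]
    (α γ ρ q : ℝ) (hα : 0 < α) (hγ : 0 < γ) (hρ : 0 < ρ) (hq : 1 < q)
    (qs : ℝ) (hqs : qs = q / (q - 1))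
    (φ : H → ℝ)
    (hφ : ∀ v : H, φ v =
      if ‖v‖ ≤ ρ ^ (qs / q) then α + ‖v‖ ^ q / q
      else α - ρ ^ qs / qs + ρ * ‖v‖)
    (σ : ℝ) (x : H)
    (h1 : ‖x‖ ≤ γ * ρ)
    (h2 : ‖x‖ ^ qs ≤ γ ^ qs * qs * (α - σ / γ)) :
    ∀ p : ℝ × H,
      IsProx (fun w => (γ : EReal) * perspR φ w) (σ, x) p ↔ p = (0, 0) :=
  prox_generalized_huber_zero_general α γ ρ q hγ hq qs hqs φ hφ σ x h1 h2
end
end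

section
/- Let H be a real Hilbert space, let α > 0, γ > 0, ρ > 0, q > 1, set q* = q/(q−1), and let φ be the generalized Huber function φ(x) = α − ρ^{q*}/q* + ρ‖x‖ if ‖x‖ > ρ^{q*/q}, φ(x) = α + ‖x‖^q/q if ‖x‖ ≤ ρ^{q*/q}. Let σ ∈ ℝ and x ∈ H. If σ > γ(α − ρ^{q*}/q*) and ‖x‖ ≥ γρ^{q*−1}(σ/γ + ρ^{2−q*} + ρ^{q*}/q* − α), then prox_{γφ̃}(σ,x) = (σ + γ(ρ^{q*}/q* − α), (1 − γρ/‖x‖) x). -/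
/-! With `c = α - ρ^{q*}/q*`, Young's inequality gives `φ ≥ c + ρ‖·‖`, with equality as soon as
`‖v‖ ≥ ρ^{q*-1}`. Hence `γ φ̃ (t, w) ≥ γ c t + ⟪γρ x/‖x‖, w⟫`, a linear minorant which is attained at
the candidate point `p` (there `w` is a nonnegative multiple of `x` and `‖w‖ ≥ ρ^{q*-1} t`) and whose
gradient is `(σ, x) - p`. Completing the square, `p` is the unique minimizer of
`γ φ̃ + ½‖(σ, x) - ·‖²`. -/

noncomputable section

open scoped RealInnerProductSpace

section Perspective

variable {H : Type*} [NormedAddCommGroup H] [NormedSpace ℝ H]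

lemma perspR_of_pos (φ : H → ℝ) {t : ℝ} (ht : 0 < t) (w : H) :
    perspR φ (t, w) = ((t * φ (t⁻¹ • w) : ℝ) : EReal) :=
  if_pos ht

lemma exists_add_sub_eq_mul_norm {φ : H → ℝ} {c ρ R : ℝ}
    (heq : ∀ v, R ≤ ‖v‖ → φ v = c + ρ * ‖v‖) (w : H) :
    ∃ y, φ (w + y) - φ y = ρ * ‖w‖ := by
  rcases eq_or_ne w 0 with rfl | hw
  · exact ⟨0, by simp⟩
  have hw' : 0 < ‖w‖ := norm_pos_iff.2 hw
  refine ⟨(|R| / ‖w‖) • w, ?_⟩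
  have hy : ‖(|R| / ‖w‖) • w‖ = |R| := by
    rw [norm_smul_of_nonneg (by positivity)]; field_simp
  have hwy : ‖w + (|R| / ‖w‖) • w‖ = ‖w‖ + |R| := by
    rw [show w + (|R| / ‖w‖) • w = (1 + |R| / ‖w‖) • w by rw [add_smul, one_smul],
      norm_smul_of_nonneg (by positivity)]
    field_simp
  have hR := le_abs_self R
  rw [heq (w + _) (by rw [hwy]; linarith [norm_nonneg w]), heq _ (by rwa [hy]), hy, hwy]
  ring

theorem coe_mul_add_mul_norm_le_perspR {φ : H → ℝ} {c ρ R : ℝ}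
    (hge : ∀ v, c + ρ * ‖v‖ ≤ φ v) (heq : ∀ v, R ≤ ‖v‖ → φ v = c + ρ * ‖v‖) (y : ℝ × H) :
    ((c * y.1 + ρ * ‖y.2‖ : ℝ) : EReal) ≤ perspR φ y := by
  obtain ⟨t, w⟩ := y
  rcases lt_trichotomy t 0 with ht | rfl | ht
  · simp [perspR, ht.not_gt, ht.ne]
  · -- the recession function is attained along a ray on which `φ` is affine in the norm
    obtain ⟨y, hy⟩ := exists_add_sub_eq_mul_norm heq w
    simp only [perspR, lt_irrefl, if_false, if_true]
    exact le_iSup_of_le y (by rw [hy]; simp)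
  · rw [perspR_of_pos φ ht, EReal.coe_le_coe_iff]
    have h := mul_le_mul_of_nonneg_left (hge (t⁻¹ • w)) ht.le
    rw [norm_smul_of_nonneg (inv_nonneg.2 ht.le)] at h
    calc c * t + ρ * ‖w‖ = t * (c + ρ * (t⁻¹ * ‖w‖)) := by field_simp
      _ ≤ t * φ (t⁻¹ • w) := h

theorem perspR_eq_of_mul_le_norm {φ : H → ℝ} {c ρ R : ℝ}
    (heq : ∀ v, R ≤ ‖v‖ → φ v = c + ρ * ‖v‖) {t : ℝ} (ht : 0 < t) {w : H} (hw : R * t ≤ ‖w‖) :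
    perspR φ (t, w) = ((c * t + ρ * ‖w‖ : ℝ) : EReal) := by
  have hnorm : ‖t⁻¹ • w‖ = t⁻¹ * ‖w‖ := norm_smul_of_nonneg (inv_nonneg.2 ht.le) w
  have hR : R ≤ ‖t⁻¹ • w‖ := by rw [hnorm, le_inv_mul_iff₀ ht]; linarith
  rw [perspR_of_pos φ ht, heq _ hR, hnorm]
  congr 1
  field_simp

end Perspective

section Prox

variable {H : Type*} [NormedAddCommGroup H] [InnerProductSpace ℝ H]

lemma affine_add_half_sq_dist_eq {a : ℝ} {b : H} {p z : ℝ × H} (hz : z = (p.1 + a, p.2 + b))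
    (y : ℝ × H) :
    a * y.1 + ⟪b, y.2⟫ + ((z.1 - y.1) ^ 2 + ‖z.2 - y.2‖ ^ 2) / 2 =
      a * p.1 + ⟪b, p.2⟫ + ((z.1 - p.1) ^ 2 + ‖z.2 - p.2‖ ^ 2) / 2 +
        ((y.1 - p.1) ^ 2 + ‖y.2 - p.2‖ ^ 2) / 2 := by
  subst hz
  have hsplit : p.2 + b - y.2 = b - (y.2 - p.2) := by abel
  have hinner : ⟪b, y.2⟫ = ⟪b, p.2⟫ + ⟪b, y.2 - p.2⟫ := by rw [inner_sub_right]; ring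
  simp only [add_sub_cancel_left, hsplit, hinner, norm_sub_sq_real]
  ring

/-- `(a, b)` is a subgradient of `ψ` at `p`, witnessed by a linear minorant touching `ψ` at `p`;
hence `p` is the prox of `ψ` at `p + (a, b)`. -/
theorem isProx_iff_eq_of_affine_minorant {ψ : ℝ × H → EReal} {a : ℝ} {b : H} {p z : ℝ × H}
    (hmin : ∀ y, ((a * y.1 + ⟪b, y.2⟫ : ℝ) : EReal) ≤ ψ y)
    (hp : ψ p = ((a * p.1 + ⟪b, p.2⟫ : ℝ) : EReal)) (hz : z = (p.1 + a, p.2 + b))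
    (p' : ℝ × H) : IsProx ψ z p' ↔ p' = p := by
  set m : ℝ := a * p.1 + ⟪b, p.2⟫ + ((z.1 - p.1) ^ 2 + ‖z.2 - p.2‖ ^ 2) / 2
  have hval : ψ p + (((z.1 - p.1) ^ 2 + ‖z.2 - p.2‖ ^ 2) / 2 : ℝ) = (m : EReal) := by
    rw [hp, ← EReal.coe_add]
  have hgrowth : ∀ y : ℝ × H, ((m + ((y.1 - p.1) ^ 2 + ‖y.2 - p.2‖ ^ 2) / 2 : ℝ) : EReal) ≤
      ψ y + (((z.1 - y.1) ^ 2 + ‖z.2 - y.2‖ ^ 2) / 2 : ℝ) := fun y => by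
    rw [← affine_add_half_sq_dist_eq hz y, EReal.coe_add]
    exact add_le_add_left (hmin y) _
  constructor
  · intro hp'
    have hle := (hgrowth p').trans ((hp' p).trans hval.le)
    rw [EReal.coe_le_coe_iff] at hle
    have h1 : p'.1 - p.1 = 0 := by nlinarith [sq_nonneg (p'.1 - p.1), sq_nonneg ‖p'.2 - p.2‖]
    have h2 : ‖p'.2 - p.2‖ = 0 := by nlinarith [sq_nonneg (p'.1 - p.1), sq_nonneg ‖p'.2 - p.2‖]
    exact Prod.ext (sub_eq_zero.1 h1) (sub_eq_zero.1 (norm_eq_zero.1 h2))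
  · intro hp' y
    rw [hp', hval]
    refine le_trans (EReal.coe_le_coe_iff.2 ?_) (hgrowth y)
    linarith [sq_nonneg (y.1 - p.1), sq_nonneg ‖y.2 - p.2‖]

theorem isProx_perspR_iff_of_mul_le_norm {φ : H → ℝ} {c ρ R : ℝ}
    (hge : ∀ v, c + ρ * ‖v‖ ≤ φ v) (heq : ∀ v, R ≤ ‖v‖ → φ v = c + ρ * ‖v‖)
    {γ : ℝ} (hγ : 0 ≤ γ) (hρ : 0 ≤ ρ) (hR : 0 < R) {σ s : ℝ} {x : H} (hs : 0 < s)
    (hσ : σ = s + γ * c) (hx : R * s + γ * ρ ≤ ‖x‖) (p : ℝ × H) :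
    IsProx (fun w => (γ : EReal) * perspR φ w) (σ, x) p ↔
      p = (s, (1 - γ * ρ / ‖x‖) • x) := by
  have hRs : 0 < R * s := mul_pos hR hs
  have hxpos : 0 < ‖x‖ := by nlinarith
  have hk : 0 ≤ 1 - γ * ρ / ‖x‖ := by
    rw [sub_nonneg, div_le_one hxpos]; linarith
  set u := (1 - γ * ρ / ‖x‖) • x
  have hu : ‖u‖ = ‖x‖ - γ * ρ := by
    rw [norm_smul_of_nonneg hk]; field_simp
  have hinner : ⟪(γ * ρ / ‖x‖) • x, u⟫ = γ * ρ * ‖u‖ := by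
    rw [hu, real_inner_smul_left, real_inner_smul_right, real_inner_self_eq_norm_sq]
    field_simp
  have hgrad : ‖(γ * ρ / ‖x‖) • x‖ = γ * ρ := by
    rw [norm_smul_of_nonneg (by positivity)]; field_simp
  refine isProx_iff_eq_of_affine_minorant (a := γ * c) (b := (γ * ρ / ‖x‖) • x)
    (fun y => ?_) ?_ ?_ p
  · have hCS : ⟪(γ * ρ / ‖x‖) • x, y.2⟫ ≤ γ * ρ * ‖y.2‖ :=
      (real_inner_le_norm _ _).trans_eq (by rw [hgrad])
    calc (((γ * c) * y.1 + ⟪(γ * ρ / ‖x‖) • x, y.2⟫ : ℝ) : EReal)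
        ≤ ((γ * (c * y.1 + ρ * ‖y.2‖) : ℝ) : EReal) := EReal.coe_le_coe_iff.2 (by linarith)
      _ ≤ (γ : EReal) * perspR φ y := by
        rw [EReal.coe_mul]
        exact mul_le_mul_of_nonneg_left (coe_mul_add_mul_norm_le_perspR hge heq y)
          (EReal.coe_nonneg.2 hγ)
  · rw [perspR_eq_of_mul_le_norm heq hs (by linarith), ← EReal.coe_mul, hinner]
    congr 1
    ring
  · rw [hσ, ← add_smul]
    congr
    simp

end Prox

section Huber

variable {E : Type*} [SeminormedAddGroup E]

def genHuber (α ρ q qs : ℝ) (v : E) : ℝ :=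
  if ‖v‖ ≤ ρ ^ (qs / q) then α + ‖v‖ ^ q / q else α - ρ ^ qs / qs + ρ * ‖v‖

variable {α ρ q qs : ℝ}

lemma genHuber_ge (hρ : 0 ≤ ρ) (hq : q.HolderConjugate qs) (v : E) :
    α - ρ ^ qs / qs + ρ * ‖v‖ ≤ genHuber α ρ q qs v := by
  unfold genHuber
  split_ifs
  · linarith [Real.young_inequality_of_nonneg (norm_nonneg v) hρ hq]
  · rfl

lemma genHuber_eq_of_le_norm (hρ : 0 ≤ ρ) (hq : q.HolderConjugate qs) {v : E}
    (hv : ρ ^ (qs - 1) ≤ ‖v‖) : genHuber α ρ q qs v = α - ρ ^ qs / qs + ρ * ‖v‖ := by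
  unfold genHuber
  rw [hq.symm.div_conj_eq_sub_one]
  split_ifs with h
  · rw [le_antisymm h hv]
    have hpow : (ρ ^ (qs - 1)) ^ q = ρ ^ qs := by
      rw [← Real.rpow_mul hρ, hq.symm.sub_one_mul_conj]
    have hmul : ρ * ρ ^ (qs - 1) = ρ ^ qs := by
      rw [← Real.rpow_one_add' hρ (by linarith [hq.symm.lt]), add_sub_cancel]
    rw [hpow, hmul]
    linear_combination ρ ^ qs * hq.inv_add_inv_eq_one
  · rfl

end Huber

theorem prox_generalized_huber_linear_regime_general
    {H : Type*} [NormedAddCommGroup H] [InnerProductSpace ℝ H]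
    (α γ ρ q : ℝ) (hγ : 0 < γ) (hρ : 0 < ρ) (hq : 1 < q)
    (qs : ℝ) (hqs : qs = q / (q - 1))
    (φ : H → ℝ)
    (hφ : ∀ v : H, φ v =
      if ‖v‖ ≤ ρ ^ (qs / q) then α + ‖v‖ ^ q / q
      else α - ρ ^ qs / qs + ρ * ‖v‖)
    (σ : ℝ) (x : H)
    (h1 : γ * (α - ρ ^ qs / qs) < σ)
    (h2 : γ * ρ ^ (qs - 1) * (σ / γ + ρ ^ (2 - qs) + ρ ^ qs / qs - α) ≤ ‖x‖) :
    ∀ p : ℝ × H,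
      IsProx (fun w => (γ : EReal) * perspR φ w) (σ, x) p ↔
        p = (σ + γ * (ρ ^ qs / qs - α), (1 - γ * ρ / ‖x‖) • x) := by
  have hconj : q.HolderConjugate qs := hqs ▸ .conjExponent hq
  obtain rfl : φ = genHuber α ρ q qs := funext hφ
  have hρρ : ρ ^ (qs - 1) * ρ ^ (2 - qs) = ρ := by
    rw [← Real.rpow_add hρ]; norm_num
  have hx : ρ ^ (qs - 1) * (σ + γ * (ρ ^ qs / qs - α)) + γ * ρ ≤ ‖x‖ := by
    have hσ : γ * (σ / γ) = σ := mul_div_cancel₀ σ hγ.ne'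
    refine le_of_eq_of_le ?_ h2
    linear_combination (-ρ ^ (qs - 1)) * hσ - γ * hρρ
  exact isProx_perspR_iff_of_mul_le_norm (genHuber_ge hρ.le hconj)
    (fun v => genHuber_eq_of_le_norm hρ.le hconj) hγ.le hρ.le (by positivity)
    (by linarith) (by ring) hx

/-- Prox of the perspective of the generalized Huber function: linear regime. -/
theorem prox_generalized_huber_linear_regime
    {H : Type*} [NormedAddCommGroup H] [InnerProductSpace ℝ H] [CompleteSpace H]
    (α γ ρ q : ℝ) (hα : 0 < α) (hγ : 0 < γ) (hρ : 0 < ρ) (hq : 1 < q)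
    (qs : ℝ) (hqs : qs = q / (q - 1))
    (φ : H → ℝ)
    (hφ : ∀ v : H, φ v =
      if ‖v‖ ≤ ρ ^ (qs / q) then α + ‖v‖ ^ q / q
      else α - ρ ^ qs / qs + ρ * ‖v‖)
    (σ : ℝ) (x : H)
    (h1 : γ * (α - ρ ^ qs / qs) < σ)
    (h2 : γ * ρ ^ (qs - 1) * (σ / γ + ρ ^ (2 - qs) + ρ ^ qs / qs - α) ≤ ‖x‖) :
    ∀ p : ℝ × H,
      IsProx (fun w => (γ : EReal) * perspR φ w) (σ, x) p ↔
        p = (σ + γ * (ρ ^ qs / qs - α), (1 - γ * ρ / ‖x‖) • x) :=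
  prox_generalized_huber_linear_regime_general α γ ρ q hγ hρ hq qs hqs φ hφ σ x h1 h2
end
end

section
/- Let H be a real Hilbert space, let α > 0, γ > 0, ρ > 0, κ > 0, q > 1, set q* = q/(q−1) and C = {x ∈ H : ‖x‖ ≤ ρ}, and let φ(x) = α + κ‖x‖ + d_C(x)^q/(q ρ^{q*−1}) be the generalized Berhu function. Let σ ∈ ℝ and x ∈ H. If γκ ≤ ‖x‖ ≤ γκ + ρ(σ − γα), then prox_{γφ̃}(σ,x) = (σ − γα, (1 − γκ/‖x‖) x). If σ > γα and ‖x‖ < γκ, then prox_{γφ̃}(σ,x) = (σ − γα, 0). -/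
/-!
Both regimes have the same mechanism. Since `φ ≥ α + κ‖·‖` and `φ(0) = α`, the perspective
satisfies `φ̃(s, v) ≥ sα + κ‖v‖` everywhere (for `s = 0` test the recession supremum at `y = 0`),
with equality at `(t, u) = (σ - γα, u)` because `u / t` lies in the ball where `φ = α + κ‖·‖`.
The real minorant `γ(sα + κ‖v‖) + ½‖(σ, x) - (s, v)‖²` is minimised at `(t, u)` with quadratic
growth, as `x - u` is a subgradient of `γκ‖·‖` at `u`; quadratic growth of a minorant that is
attained at `(t, u)` gives both minimality and uniqueness of the proximal point.
-/

noncomputable section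

open scoped RealInnerProductSpace

section Perspective

variable {H : Type*} [NormedAddCommGroup H] [NormedSpace ℝ H] {φ : H → ℝ} {κ : ℝ}

lemma coe_le_perspR (hφ : ∀ v, φ 0 + κ * ‖v‖ ≤ φ v) (p : ℝ × H) :
    ((p.1 * φ 0 + κ * ‖p.2‖ : ℝ) : EReal) ≤ perspR φ p := by
  obtain ⟨s, v⟩ := p
  rcases lt_trichotomy s 0 with hs | rfl | hs
  · simp [perspR, hs.not_gt, hs.ne]
  · rw [perspR, if_neg (lt_irrefl 0), if_pos rfl]
    refine le_trans ?_ (le_iSup _ (0 : H))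
    rw [EReal.coe_le_coe_iff, add_zero]
    linarith [hφ v]
  · have hnorm : ‖s⁻¹ • v‖ = ‖v‖ / s := by
      rw [norm_smul, Real.norm_of_nonneg (inv_nonneg.2 hs.le), inv_mul_eq_div]
    have key : s * (φ 0 + κ * (‖v‖ / s)) ≤ s * φ (s⁻¹ • v) :=
      mul_le_mul_of_nonneg_left (hnorm ▸ hφ _) hs.le
    rw [perspR, if_pos hs, EReal.coe_le_coe_iff]
    convert key using 1
    field_simp

lemma perspR_eq_of_norm_le {ρ t : ℝ} {u : H}
    (hφ : ∀ v, ‖v‖ ≤ ρ → φ v = φ 0 + κ * ‖v‖) (ht : 0 ≤ t) (hu : ‖u‖ ≤ ρ * t) :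
    perspR φ (t, u) = ((t * φ 0 + κ * ‖u‖ : ℝ) : EReal) := by
  rcases ht.eq_or_lt with rfl | ht
  · obtain rfl : u = 0 := norm_le_zero_iff.1 (by simpa using hu)
    simp [perspR]
  · have hnorm : ‖t⁻¹ • u‖ = ‖u‖ / t := by
      rw [norm_smul, Real.norm_of_nonneg (inv_nonneg.2 ht.le), inv_mul_eq_div]
    have hball : ‖t⁻¹ • u‖ ≤ ρ := by rw [hnorm, div_le_iff₀ ht]; exact hu
    rw [perspR, if_pos ht, hφ _ hball, hnorm]
    congr 1
    field_simp

end Perspective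

theorem isProx_iff_of_minorant {H : Type*} [NormedAddCommGroup H] {ψ : ℝ × H → EReal}
    {m : ℝ × H → ℝ} {z p₀ : ℝ × H} (hle : ∀ w, (m w : EReal) ≤ ψ w) (heq : ψ p₀ = m p₀)
    (hgrowth : ∀ w, m p₀ + ((z.1 - p₀.1) ^ 2 + ‖z.2 - p₀.2‖ ^ 2) / 2
        + ((w.1 - p₀.1) ^ 2 + ‖w.2 - p₀.2‖ ^ 2) / 2
      ≤ m w + ((z.1 - w.1) ^ 2 + ‖z.2 - w.2‖ ^ 2) / 2)
    (p : ℝ × H) : IsProx ψ z p ↔ p = p₀ := by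
  have hmin (w : ℝ × H) :
      (m p₀ : EReal) + (((z.1 - p₀.1) ^ 2 + ‖z.2 - p₀.2‖ ^ 2) / 2 : ℝ)
        + (((w.1 - p₀.1) ^ 2 + ‖w.2 - p₀.2‖ ^ 2) / 2 : ℝ)
      ≤ ψ w + (((z.1 - w.1) ^ 2 + ‖z.2 - w.2‖ ^ 2) / 2 : ℝ) := by
    refine le_trans ?_ (add_le_add_left (hle w) _)
    exact_mod_cast hgrowth w
  constructor
  · intro hp
    have h := (hmin p).trans (hp p₀)
    rw [heq] at h
    norm_cast at h
    have h₁ : (p.1 - p₀.1) ^ 2 = 0 := by nlinarith [sq_nonneg ‖p.2 - p₀.2‖]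
    have h₂ : ‖p.2 - p₀.2‖ ^ 2 = 0 := by nlinarith [sq_nonneg (p.1 - p₀.1)]
    exact Prod.ext (sub_eq_zero.1 (pow_eq_zero_iff two_ne_zero |>.1 h₁))
      (sub_eq_zero.1 (norm_eq_zero.1 (pow_eq_zero_iff two_ne_zero |>.1 h₂)))
  · rintro rfl w
    refine le_trans ?_ (hmin w)
    rw [heq]
    exact le_add_of_nonneg_right (EReal.coe_nonneg.2 (by positivity))

section InnerProductSpace

variable {H : Type*} [NormedAddCommGroup H] [InnerProductSpace ℝ H]

lemma mul_norm_add_half_sq_le {c : ℝ} {x u : H} (hinner : ⟪x - u, u⟫ = c * ‖u‖)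
    (hnorm : ‖x - u‖ ≤ c) (v : H) :
    c * ‖u‖ + ‖x - u‖ ^ 2 / 2 + ‖v - u‖ ^ 2 / 2 ≤ c * ‖v‖ + ‖x - v‖ ^ 2 / 2 := by
  have hexpand : ‖x - v‖ ^ 2 = ‖x - u‖ ^ 2 - 2 * ⟪x - u, v - u⟫ + ‖v - u‖ ^ 2 := by
    rw [← norm_sub_sq_real, sub_sub_sub_cancel_right]
  have hcs : ⟪x - u, v⟫ ≤ c * ‖v‖ :=
    (real_inner_le_norm _ _).trans (mul_le_mul_of_nonneg_right hnorm (norm_nonneg v))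
  rw [inner_sub_right, hinner] at hexpand
  linarith

lemma soft_threshold_subgradient {c : ℝ} {x : H} (hc : 0 < c) (hcx : c ≤ ‖x‖) :
    ⟪x - (1 - c / ‖x‖) • x, (1 - c / ‖x‖) • x⟫ = c * ‖(1 - c / ‖x‖) • x‖ ∧
      ‖x - (1 - c / ‖x‖) • x‖ ≤ c ∧ ‖(1 - c / ‖x‖) • x‖ = ‖x‖ - c := by
  have hx : 0 < ‖x‖ := hc.trans_le hcx
  have hsub : x - (1 - c / ‖x‖) • x = (c / ‖x‖) • x := by module
  have hnorm : ‖(1 - c / ‖x‖) • x‖ = ‖x‖ - c := by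
    rw [norm_smul, Real.norm_of_nonneg (by rw [sub_nonneg, div_le_one hx]; exact hcx)]
    field_simp
  refine ⟨?_, ?_, hnorm⟩
  · rw [hsub, hnorm, real_inner_smul_left, real_inner_smul_right, real_inner_self_eq_norm_sq]
    field_simp
  · rw [hsub, norm_smul, Real.norm_of_nonneg (by positivity), div_mul_cancel₀ _ hx.ne']

theorem isProx_perspR_iff {φ : H → ℝ} {α κ ρ γ σ : ℝ} {x u : H} (hγ : 0 ≤ γ) (hρ : 0 ≤ ρ)
    (hlow : ∀ v, α + κ * ‖v‖ ≤ φ v) (hball : ∀ v, ‖v‖ ≤ ρ → φ v = α + κ * ‖v‖)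
    (ht : 0 ≤ σ - γ * α) (hu : ‖u‖ ≤ ρ * (σ - γ * α))
    (hinner : ⟪x - u, u⟫ = γ * κ * ‖u‖) (hnorm : ‖x - u‖ ≤ γ * κ) (p : ℝ × H) :
    IsProx (fun w => (γ : EReal) * perspR φ w) (σ, x) p ↔ p = (σ - γ * α, u) := by
  have hφ0 : φ 0 = α := by simpa using hball 0 (by simpa using hρ)
  subst hφ0
  refine isProx_iff_of_minorant (m := fun w => γ * (w.1 * φ 0 + κ * ‖w.2‖))
    (fun w => ?_) ?_ (fun w => ?_) p
  · rw [EReal.coe_mul]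
    exact mul_le_mul_of_nonneg_left (coe_le_perspR hlow w) (EReal.coe_nonneg.2 hγ)
  · rw [perspR_eq_of_norm_le hball ht hu, EReal.coe_mul]
  · have := mul_norm_add_half_sq_le hinner hnorm w.2
    dsimp only
    nlinarith

end InnerProductSpace

lemma berhu_ge_add_mul_norm {H : Type*} [NormedAddCommGroup H] {α ρ κ q qs : ℝ} (hρ : 0 ≤ ρ)
    (hq : 0 ≤ q) {φ : H → ℝ} (hφ : ∀ v : H, φ v =
      α + κ * ‖v‖ + Metric.infDist v {y : H | ‖y‖ ≤ ρ} ^ q / (q * ρ ^ (qs - 1)))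
    (v : H) : α + κ * ‖v‖ ≤ φ v := by
  rw [hφ]
  have : 0 ≤ Metric.infDist v {y : H | ‖y‖ ≤ ρ} ^ q / (q * ρ ^ (qs - 1)) :=
    div_nonneg (Real.rpow_nonneg Metric.infDist_nonneg q) (by positivity)
  linarith

lemma berhu_eq_add_mul_norm_of_norm_le {H : Type*} [NormedAddCommGroup H] {α ρ κ q qs : ℝ}
    (hq : q ≠ 0) {φ : H → ℝ} (hφ : ∀ v : H, φ v =
      α + κ * ‖v‖ + Metric.infDist v {y : H | ‖y‖ ≤ ρ} ^ q / (q * ρ ^ (qs - 1)))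
    (v : H) (hv : ‖v‖ ≤ ρ) : φ v = α + κ * ‖v‖ := by
  rw [hφ, Metric.infDist_zero_of_mem (show v ∈ {y : H | ‖y‖ ≤ ρ} from hv),
    Real.zero_rpow hq, zero_div, add_zero]

theorem prox_generalized_berhu_middle_general
    {H : Type*} [NormedAddCommGroup H] [InnerProductSpace ℝ H]
    (α γ ρ κ q : ℝ) (hγ : 0 < γ) (hρ : 0 < ρ) (hκ : 0 < κ)
    (hq : 1 < q) (qs : ℝ)
    (φ : H → ℝ)
    (hφ : ∀ v : H, φ v =
      α + κ * ‖v‖ +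
        Metric.infDist v {y : H | ‖y‖ ≤ ρ} ^ q / (q * ρ ^ (qs - 1)))
    (σ : ℝ) (x : H) :
    (γ * κ ≤ ‖x‖ → ‖x‖ ≤ γ * κ + ρ * (σ - γ * α) →
      ∀ p : ℝ × H,
        IsProx (fun w => (γ : EReal) * perspR φ w) (σ, x) p ↔
          p = (σ - γ * α, (1 - γ * κ / ‖x‖) • x)) ∧
    (γ * α < σ → ‖x‖ < γ * κ →
      ∀ p : ℝ × H,
        IsProx (fun w => (γ : EReal) * perspR φ w) (σ, x) p ↔
          p = (σ - γ * α, (0 : H))) := by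
  have hlow := berhu_ge_add_mul_norm hρ.le (by linarith) hφ
  have hball := berhu_eq_add_mul_norm_of_norm_le (by linarith) hφ
  have hc : 0 < γ * κ := mul_pos hγ hκ
  refine ⟨fun hcx hxρ => ?_, fun hσ hx => ?_⟩
  · obtain ⟨hinner, hnorm, hnorm_u⟩ := soft_threshold_subgradient hc hcx
    have ht : 0 ≤ σ - γ * α := (mul_nonneg_iff_of_pos_left hρ).1 (by linarith)
    exact isProx_perspR_iff hγ.le hρ.le hlow hball ht (by linarith) hinner hnorm
  · have ht : 0 < σ - γ * α := by linarith
    exact isProx_perspR_iff hγ.le hρ.le hlow hball ht.le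
      (by simpa using mul_nonneg hρ.le ht.le) (by simp) (by simpa using hx.le)

/-- Prox of the perspective of the generalized Berhu function: soft-thresholding
and interior regimes. -/
theorem prox_generalized_berhu_middle
    {H : Type*} [NormedAddCommGroup H] [InnerProductSpace ℝ H] [CompleteSpace H]
    (α γ ρ κ q : ℝ) (hα : 0 < α) (hγ : 0 < γ) (hρ : 0 < ρ) (hκ : 0 < κ)
    (hq : 1 < q) (qs : ℝ) (hqs : qs = q / (q - 1))
    (φ : H → ℝ)
    (hφ : ∀ v : H, φ v =
      α + κ * ‖v‖ +
        Metric.infDist v {y : H | ‖y‖ ≤ ρ} ^ q / (q * ρ ^ (qs - 1)))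
    (σ : ℝ) (x : H) :
    (γ * κ ≤ ‖x‖ → ‖x‖ ≤ γ * κ + ρ * (σ - γ * α) →
      ∀ p : ℝ × H,
        IsProx (fun w => (γ : EReal) * perspR φ w) (σ, x) p ↔
          p = (σ - γ * α, (1 - γ * κ / ‖x‖) • x)) ∧
    (γ * α < σ → ‖x‖ < γ * κ →
      ∀ p : ℝ × H,
        IsProx (fun w => (γ : EReal) * perspR φ w) (σ, x) p ↔
          p = (σ - γ * α, (0 : H))) :=
  prox_generalized_berhu_middle_general α γ ρ κ q hγ hρ hκ hq qs φ hφ σ x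
end
end

section
/- Let H be a real Hilbert space, let α > 0 and ε > 0, and define φ : H → ℝ by φ(x) = α + max(‖x‖ − ε, 0). Then the perspective of φ satisfies, for all σ ∈ ℝ and x ∈ H: φ̃(σ,x) = ασ + max(‖x‖ − εσ, 0) if σ ≥ 0, and φ̃(σ,x) = +∞ if σ < 0. Moreover, for γ > 0, σ ∈ ℝ, and x ∈ H: if σ + ε‖x‖ ≤ γα and ‖x‖ ≤ γ, then prox_{γφ̃}(σ,x) = (0,0); and if σ ≥ γα and ‖x‖ ≤ ε(σ − γα), then prox_{γφ̃}(σ,x) = (σ − γα, x). -/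
noncomputable section

/-- The perspective of the Vapnik function, on `σ ≥ 0`. -/
lemma persp_vapnik {H : Type*} [NormedAddCommGroup H] [NormedSpace ℝ H]
    (α ε : ℝ) (hε : 0 < ε) (φ : H → ℝ)
    (hφ : ∀ v : H, φ v = α + max (‖v‖ - ε) 0) (σ : ℝ) (x : H) (hσ : 0 ≤ σ) :
    perspR φ (σ, x) = ((α * σ + max (‖x‖ - ε * σ) 0 : ℝ) : EReal) := by
  rcases hσ.lt_or_eq with h | h
  · simp only [perspR, if_pos h]
    norm_cast
    rw [hφ, norm_smul, norm_inv, Real.norm_eq_abs, abs_of_pos h, mul_add,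
      mul_max_of_nonneg _ _ h.le, mul_sub, mul_inv_cancel_left₀ h.ne', mul_zero]
    ring_nf
  · subst h
    have h0 : ¬ (0:ℝ) < 0 := lt_irrefl 0
    simp only [perspR, if_neg h0, if_pos rfl]
    have hx : (α * 0 + max (‖x‖ - ε * 0) 0 : ℝ) = ‖x‖ := by
      simp [max_eq_left (norm_nonneg x)]
    rw [hx]
    apply le_antisymm
    · apply iSup_le
      intro y
      rw [EReal.coe_le_coe_iff, hφ, hφ]
      have h1 : ‖x + y‖ - ε ≤ (‖y‖ - ε) + ‖x‖ := by
        have := norm_add_le x y; linarith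
      have h2 : max (‖x + y‖ - ε) 0 ≤ max (‖y‖ - ε) 0 + ‖x‖ :=
        max_le (h1.trans (by linarith [le_max_left (‖y‖ - ε) (0:ℝ)]))
          (by linarith [le_max_right (‖y‖ - ε) (0:ℝ), norm_nonneg x])
      linarith
    · rcases eq_or_ne x 0 with hx0 | hx0
      · subst hx0
        have : ((‖(0:H)‖:ℝ):EReal) = ((φ (0 + 0) - φ 0 : ℝ) : EReal) := by
          norm_num
        rw [this]
        exact le_iSup (fun y : H => ((φ (0 + y) - φ y : ℝ) : EReal)) (0:H)
      · have hxn : 0 < ‖x‖ := norm_pos_iff.2 hx0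
        set y₀ : H := (ε / ‖x‖) • x with hy₀
        have hny : ‖y₀‖ = ε := by
          rw [hy₀, norm_smul, Real.norm_eq_abs, abs_of_pos (div_pos hε hxn),
            div_mul_cancel₀ _ hxn.ne']
        have hxy : ‖x + y₀‖ = ‖x‖ + ε := by
          have : x + y₀ = (1 + ε / ‖x‖) • x := by
            rw [hy₀, add_smul, one_smul]
          rw [this, norm_smul, Real.norm_eq_abs,
            abs_of_pos (by positivity), add_mul, one_mul,
            div_mul_cancel₀ _ hxn.ne']
        have hv : (φ (x + y₀) - φ y₀ : ℝ) = ‖x‖ := by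
          rw [hφ, hφ, hxy, hny]
          simp [max_eq_left hxn.le]
        have : ((‖x‖:ℝ):EReal) = ((φ (x + y₀) - φ y₀ : ℝ) : EReal) := by rw [hv]
        rw [this]
        exact le_iSup (fun y : H => ((φ (x + y) - φ y : ℝ) : EReal)) y₀

/-- Midpoint convexity of the scaled Vapnik-perspective real function. -/
lemma vapnik_mid {H : Type*} [NormedAddCommGroup H] [NormedSpace ℝ H]
    (γ α ε : ℝ) (hγ : 0 ≤ γ) (p q : ℝ × H) :
    γ * (α * ((p.1 + q.1)/2) + max (‖(2:ℝ)⁻¹ • (p.2 + q.2)‖ - ε * ((p.1 + q.1)/2)) 0)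
      ≤ (γ * (α * p.1 + max (‖p.2‖ - ε * p.1) 0)
          + γ * (α * q.1 + max (‖q.2‖ - ε * q.1) 0)) / 2 := by
  have hn : ‖(2:ℝ)⁻¹ • (p.2 + q.2)‖ ≤ (‖p.2‖ + ‖q.2‖)/2 := by
    rw [norm_smul, Real.norm_eq_abs]
    have := norm_add_le p.2 q.2
    rw [abs_of_pos (by norm_num : (0:ℝ) < 2⁻¹)]
    linarith
  have h1 := le_max_left (‖p.2‖ - ε * p.1) (0:ℝ)
  have h2 := le_max_right (‖p.2‖ - ε * p.1) (0:ℝ)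
  have h3 := le_max_left (‖q.2‖ - ε * q.1) (0:ℝ)
  have h4 := le_max_right (‖q.2‖ - ε * q.1) (0:ℝ)
  have hm : max (‖(2:ℝ)⁻¹ • (p.2 + q.2)‖ - ε * ((p.1 + q.1)/2)) 0
      ≤ (max (‖p.2‖ - ε * p.1) 0 + max (‖q.2‖ - ε * q.1) 0) / 2 :=
    max_le (by linarith) (by linarith)
  have := mul_le_mul_of_nonneg_left
    (add_le_add (le_refl (α * ((p.1 + q.1)/2))) hm) hγ
  nlinarith [this]

/-- Uniqueness of the prox, in real terms. -/
lemma vapnik_prox_unique {H : Type*} [NormedAddCommGroup H] [InnerProductSpace ℝ H]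
    (γ α ε : ℝ) (hγ : 0 ≤ γ) (z p q : ℝ × H)
    (hp1 : 0 ≤ p.1) (hq1 : 0 ≤ q.1)
    (Hp : ∀ y : ℝ × H, 0 ≤ y.1 →
      γ * (α * p.1 + max (‖p.2‖ - ε * p.1) 0) + ((z.1 - p.1)^2 + ‖z.2 - p.2‖^2)/2 ≤
      γ * (α * y.1 + max (‖y.2‖ - ε * y.1) 0) + ((z.1 - y.1)^2 + ‖z.2 - y.2‖^2)/2)
    (Hq : ∀ y : ℝ × H, 0 ≤ y.1 →
      γ * (α * q.1 + max (‖q.2‖ - ε * q.1) 0) + ((z.1 - q.1)^2 + ‖z.2 - q.2‖^2)/2 ≤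
      γ * (α * y.1 + max (‖y.2‖ - ε * y.1) 0) + ((z.1 - y.1)^2 + ‖z.2 - y.2‖^2)/2) :
    p = q := by
  have hpq := Hp q hq1
  have hqp := Hq p hp1
  have hpm := Hp ((p.1 + q.1)/2, (2:ℝ)⁻¹ • (p.2 + q.2)) (by dsimp only; linarith)
  dsimp only at hpm
  have hpar := parallelogram_law_with_norm ℝ (z.2 - p.2) (z.2 - q.2)
  have hzm : z.2 - (2:ℝ)⁻¹ • (p.2 + q.2) = (2:ℝ)⁻¹ • ((z.2 - p.2) + (z.2 - q.2)) := by
    module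
  have hsub : (z.2 - p.2) - (z.2 - q.2) = q.2 - p.2 := by abel
  rw [hsub] at hpar
  have hnzm : ‖z.2 - (2:ℝ)⁻¹ • (p.2 + q.2)‖^2
      = (‖z.2 - p.2‖^2 + ‖z.2 - q.2‖^2)/2 - ‖q.2 - p.2‖^2/4 := by
    rw [hzm, norm_smul, Real.norm_eq_abs, abs_of_pos (by norm_num : (0:ℝ) < 2⁻¹)]
    nlinarith [hpar]
  rw [hnzm] at hpm
  have hid : (z.1 - (p.1 + q.1)/2)^2
      = ((z.1 - p.1)^2 + (z.1 - q.1)^2)/2 - (p.1 - q.1)^2/4 := by ring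
  rw [hid] at hpm
  have hmid := vapnik_mid γ α ε hγ p q
  have hd : (p.1 - q.1)^2/4 + ‖q.2 - p.2‖^2/4 ≤ 0 := by
    linarith [hpm, hpq, hqp, hmid]
  have h1 : p.1 = q.1 := by
    have := sq_nonneg (p.1 - q.1)
    have := sq_nonneg ‖q.2 - p.2‖
    have hz : (p.1 - q.1)^2 = 0 := by linarith
    have := pow_eq_zero_iff (n := 2) (by norm_num) |>.1 hz
    linarith [sub_eq_zero.1 this]
  have h2 : p.2 = q.2 := by
    have hz : ‖q.2 - p.2‖ = 0 := by
      have := sq_nonneg (p.1 - q.1)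
      have := sq_nonneg ‖q.2 - p.2‖
      have hz2 : ‖q.2 - p.2‖^2 = 0 := by linarith
      exact pow_eq_zero_iff (n := 2) (by norm_num) |>.1 hz2
    exact (sub_eq_zero.1 (norm_eq_zero.1 hz)).symm
  exact Prod.ext h1 h2

/-- The prox property, reduced to real inequalities. -/
lemma vapnik_isProx_iff {H : Type*} [NormedAddCommGroup H] [InnerProductSpace ℝ H]
    (α ε γ : ℝ) (hε : 0 < ε) (hγ : 0 < γ)
    (φ : H → ℝ) (hφ : ∀ v : H, φ v = α + max (‖v‖ - ε) 0) (z p : ℝ × H) :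
    IsProx (fun w => (γ : EReal) * perspR φ w) z p ↔
      (0 ≤ p.1 ∧ ∀ y : ℝ × H, 0 ≤ y.1 →
        γ * (α * p.1 + max (‖p.2‖ - ε * p.1) 0) + ((z.1 - p.1)^2 + ‖z.2 - p.2‖^2)/2 ≤
        γ * (α * y.1 + max (‖y.2‖ - ε * y.1) 0) + ((z.1 - y.1)^2 + ‖z.2 - y.2‖^2)/2) := by
  have hψ : ∀ w : ℝ × H, 0 ≤ w.1 →
      (γ : EReal) * perspR φ w = ((γ * (α * w.1 + max (‖w.2‖ - ε * w.1) 0) : ℝ) : EReal) := by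
    intro w hw
    have h1 : perspR φ w = ((α * w.1 + max (‖w.2‖ - ε * w.1) 0 : ℝ) : EReal) :=
      persp_vapnik α ε hε φ hφ w.1 w.2 hw
    rw [h1, ← EReal.coe_mul]
  have hψtop : ∀ w : ℝ × H, w.1 < 0 →
      (γ : EReal) * perspR φ w = ⊤ := by
    intro w hw
    have h1 : perspR φ w = ⊤ := by
      simp only [perspR, if_neg (not_lt.2 hw.le), if_neg hw.ne]
    rw [h1, EReal.mul_top_of_pos (by exact_mod_cast hγ)]
  constructor
  · intro h
    have hp1 : 0 ≤ p.1 := by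
      by_contra hneg
      push_neg at hneg
      have h00 := h (0, 0)
      simp only at h00
      rw [hψtop p hneg, hψ (0, 0) le_rfl, EReal.top_add_coe,
        ← EReal.coe_add] at h00
      exact (EReal.coe_lt_top _).not_ge (le_of_eq (top_le_iff.1 h00).symm)
    refine ⟨hp1, fun y hy => ?_⟩
    have hyy := h y
    simp only at hyy
    rw [hψ p hp1, hψ y hy, ← EReal.coe_add, ← EReal.coe_add] at hyy
    exact EReal.coe_le_coe_iff.1 hyy
  · rintro ⟨hp1, hre⟩
    intro y
    rcases lt_or_ge y.1 0 with hy | hy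
    · show (γ : EReal) * perspR φ p + _ ≤ (γ : EReal) * perspR φ y + _
      rw [hψtop y hy, EReal.top_add_coe]
      exact le_top
    · show (γ : EReal) * perspR φ p + _ ≤ (γ : EReal) * perspR φ y + _
      rw [hψ p hp1, hψ y hy, ← EReal.coe_add, ← EReal.coe_add]
      exact EReal.coe_le_coe_iff.2 (hre y hy)

/-- The perspective of the abstract Vapnik function
`φ = α + max(‖·‖ − ε, 0)`, and two prox formulas. -/
theorem vapnik_perspective_and_prox
    {H : Type*} [NormedAddCommGroup H] [InnerProductSpace ℝ H] [CompleteSpace H]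
    (α ε : ℝ) (hα : 0 < α) (hε : 0 < ε)
    (φ : H → ℝ) (hφ : ∀ v : H, φ v = α + max (‖v‖ - ε) 0) :
    (∀ σ : ℝ, ∀ x : H,
        (0 ≤ σ → perspR φ (σ, x) = ((α * σ + max (‖x‖ - ε * σ) 0 : ℝ) : EReal)) ∧
        (σ < 0 → perspR φ (σ, x) = (⊤ : EReal))) ∧
      ∀ γ : ℝ, 0 < γ → ∀ σ : ℝ, ∀ x : H,
        (σ + ε * ‖x‖ ≤ γ * α → ‖x‖ ≤ γ →
          ∀ p : ℝ × H,
            IsProx (fun w => (γ : EReal) * perspR φ w) (σ, x) p ↔ p = (0, 0)) ∧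
        (γ * α ≤ σ → ‖x‖ ≤ ε * (σ - γ * α) →
          ∀ p : ℝ × H,
            IsProx (fun w => (γ : EReal) * perspR φ w) (σ, x) p ↔
              p = (σ - γ * α, x)) := by
  constructor
  · intro σ x
    refine ⟨persp_vapnik α ε hε φ hφ σ x, fun h => ?_⟩
    simp only [perspR, if_neg (not_lt.2 h.le), if_neg h.ne]
  · intro γ hγ σ x
    constructor
    · -- prox is (0,0)
      intro hσx hxγ p
      have hre0 : ∀ y : ℝ × H, 0 ≤ y.1 →
          γ * (α * ((0:ℝ),(0:H)).1 + max (‖((0:ℝ),(0:H)).2‖ - ε * ((0:ℝ),(0:H)).1) 0)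
            + (((σ,x).1 - ((0:ℝ),(0:H)).1)^2 + ‖(σ,x).2 - ((0:ℝ),(0:H)).2‖^2)/2 ≤
          γ * (α * y.1 + max (‖y.2‖ - ε * y.1) 0)
            + (((σ,x).1 - y.1)^2 + ‖(σ,x).2 - y.2‖^2)/2 := by
        intro y hy
        dsimp only
        rw [norm_zero, sub_zero, sub_zero, show ((0:ℝ) - ε * 0) = 0 by ring, max_self]
        have hns := norm_sub_sq_real x y.2
        have hin := real_inner_le_norm x y.2
        have h₁ : 0 ≤ (γ * α - σ - ε * ‖x‖) * y.1 :=
          mul_nonneg (by linarith) hy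
        have h₂ : 0 ≤ (γ - ‖x‖) * max (‖y.2‖ - ε * y.1) 0 :=
          mul_nonneg (by linarith) (le_max_right _ _)
        have h₃ : 0 ≤ ‖x‖ * (max (‖y.2‖ - ε * y.1) 0 - (‖y.2‖ - ε * y.1)) :=
          mul_nonneg (norm_nonneg x) (by linarith [le_max_left (‖y.2‖ - ε * y.1) (0:ℝ)])
        nlinarith [h₁, h₂, h₃, hns, hin, sq_nonneg y.1, sq_nonneg ‖y.2‖]
      constructor
      · intro hp
        obtain ⟨hp1, hpre⟩ := (vapnik_isProx_iff α ε γ hε hγ φ hφ (σ, x) p).1 hp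
        exact vapnik_prox_unique γ α ε hγ.le (σ, x) p ((0:ℝ),(0:H)) hp1 le_rfl hpre hre0
      · rintro rfl
        exact (vapnik_isProx_iff α ε γ hε hγ φ hφ (σ, x) ((0:ℝ),(0:H))).2 ⟨le_rfl, hre0⟩
    · -- prox is (σ - γα, x)
      intro hσ hxε p
      have hp01 : (0:ℝ) ≤ σ - γ * α := by nlinarith [mul_pos hγ hα]
      have hre0 : ∀ y : ℝ × H, 0 ≤ y.1 →
          γ * (α * (σ - γ * α) + max (‖x‖ - ε * (σ - γ * α)) 0)
            + ((σ - (σ - γ * α))^2 + ‖x - x‖^2)/2 ≤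
          γ * (α * y.1 + max (‖y.2‖ - ε * y.1) 0)
            + ((σ - y.1)^2 + ‖x - y.2‖^2)/2 := by
        intro y hy
        rw [sub_self, norm_zero, max_eq_right (by linarith : ‖x‖ - ε * (σ - γ * α) ≤ 0)]
        have h₂ : 0 ≤ γ * max (‖y.2‖ - ε * y.1) 0 :=
          mul_nonneg hγ.le (le_max_right _ _)
        nlinarith [sq_nonneg (y.1 - σ + γ * α), sq_nonneg ‖x - y.2‖, h₂]
      constructor
      · intro hp
        obtain ⟨hp1, hpre⟩ := (vapnik_isProx_iff α ε γ hε hγ φ hφ (σ, x) p).1 hp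
        exact vapnik_prox_unique γ α ε hγ.le (σ, x) p (σ - γ * α, x) hp1 hp01 hpre hre0
      · rintro rfl
        exact (vapnik_isProx_iff α ε γ hε hγ φ hφ (σ, x) (σ - γ * α, x)).2 ⟨hp01, hre0⟩
end
end

section
/- Let H be a real Hilbert space, let α > 0, ε > 0, γ > 0, and let φ(x) = α + max(‖x‖ − ε, 0) be the abstract Vapnik function. Let σ ∈ ℝ and x ∈ H. (a) If σ ≤ γ(α − ε) and ‖x‖ > γ, then prox_{γφ̃}(σ,x) = (0, (1 − γ/‖x‖) x). (b) If σ > γ(α − ε) and ‖x‖ ≥ εσ + γ(1 + ε(ε − α)), then prox_{γφ̃}(σ,x) = (σ + γ(ε − α), (1 − γ/‖x‖) x). (c) If σ + ε‖x‖ > γα and ε(σ − γα) < ‖x‖ < εσ + γ(1 + ε(ε − α)), then prox_{γφ̃}(σ,x) = ((σ + ε‖x‖ − γα)/(1 + ε²)) · (1, (ε/‖x‖) x). -/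
noncomputable section

/-!
For `s ≥ 0` the perspective of `φ = α + max (‖·‖ - ε) 0` at `(s, v)` is
`max (α s) ((α - ε) s + ‖v‖)`, a convex function, and for `s < 0` it is `+∞`. So the prox is
the minimizer over the half-space `s ≥ 0` of a convex function plus `½‖(σ, x) - ·‖²`, which is
unique by the parallelogram law. Every claimed prox has the form `(t, c • x)` with `0 ≤ c ≤ 1`;
there the reverse triangle inequality `|‖x‖ - ‖v‖| ≤ ‖x - v‖` is an equality, so minimality
reduces to an inequality in the two real variables `s` and `r = ‖v‖`, which is a sum of squares
in each regime. In regime (c) the minimizer lies on the kink `r = ε s` of the perspective.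
-/

open Set

section

variable {H : Type*} [NormedAddCommGroup H]

def vapnik (α ε : ℝ) (v : H) : ℝ := α + max (‖v‖ - ε) 0

def vapnikPersp (α ε s r : ℝ) : ℝ := max (α * s) ((α - ε) * s + r)

theorem mul_vapnik_inv_smul [NormedSpace ℝ H] (α ε : ℝ) {s : ℝ} (hs : 0 < s) (v : H) :
    s * vapnik α ε (s⁻¹ • v) = vapnikPersp α ε s ‖v‖ := by
  have hnorm : s * ‖s⁻¹ • v‖ = ‖v‖ := by
    rw [norm_smul, norm_inv, Real.norm_of_nonneg hs.le, mul_inv_cancel_left₀ hs.ne']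
  rw [vapnik, vapnikPersp, mul_add, mul_max_of_nonneg _ _ hs.le, mul_sub, hnorm, mul_zero,
    ← max_add_add_left, max_comm]
  congr 1 <;> ring

theorem vapnik_add_sub_le (α ε : ℝ) (v y : H) :
    vapnik α ε (v + y) - vapnik α ε y ≤ ‖v‖ := by
  have h : max (‖v + y‖ - ε) 0 ≤ ‖v‖ + max (‖y‖ - ε) 0 :=
    max_le (by linarith [norm_add_le v y, le_max_left (‖y‖ - ε) 0]) (by positivity)
  simp only [vapnik]
  linarith

theorem exists_vapnik_add_sub_eq [NormedSpace ℝ H] (α : ℝ) {ε : ℝ} (hε : 0 < ε) (v : H) :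
    ∃ y, vapnik α ε (v + y) - vapnik α ε y = ‖v‖ := by
  rcases eq_or_ne v 0 with rfl | hv
  · exact ⟨0, by simp⟩
  have hv' : 0 < ‖v‖ := norm_pos_iff.mpr hv
  refine ⟨(ε / ‖v‖) • v, ?_⟩
  have hy : ‖(ε / ‖v‖) • v‖ = ε := by
    rw [norm_smul, Real.norm_of_nonneg (by positivity), div_mul_cancel₀ _ hv'.ne']
  have hvy : ‖v + (ε / ‖v‖) • v‖ = ‖v‖ + ε := by
    rw [show v + (ε / ‖v‖) • v = (1 + ε / ‖v‖) • v by rw [add_smul, one_smul], norm_smul,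
      Real.norm_of_nonneg (by positivity), add_mul, one_mul, div_mul_cancel₀ _ hv'.ne']
  simp only [vapnik, hy, hvy, add_sub_cancel_right, sub_self, max_eq_left (norm_nonneg v),
    max_self]
  ring

theorem iSup_vapnik_add_sub [NormedSpace ℝ H] (α : ℝ) {ε : ℝ} (hε : 0 < ε) (v : H) :
    ⨆ y : H, ((vapnik α ε (v + y) - vapnik α ε y : ℝ) : EReal) = ‖v‖ := by
  obtain ⟨y₀, hy₀⟩ := exists_vapnik_add_sub_eq α hε v
  refine le_antisymm (iSup_le fun y => ?_) ?_
  · exact_mod_cast vapnik_add_sub_le α ε v y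
  · exact hy₀ ▸ le_iSup (fun y => ((vapnik α ε (v + y) - vapnik α ε y : ℝ) : EReal)) y₀

theorem perspR_vapnik [NormedSpace ℝ H] (α : ℝ) {ε : ℝ} (hε : 0 < ε) {w : ℝ × H}
    (hw : 0 ≤ w.1) : perspR (vapnik α ε) w = vapnikPersp α ε w.1 ‖w.2‖ := by
  rcases hw.lt_or_eq with hw | hw
  · rw [perspR, if_pos hw, mul_vapnik_inv_smul α ε hw]
  · rw [perspR, if_neg hw.not_lt, if_pos hw.symm, iSup_vapnik_add_sub α hε, vapnikPersp,
      ← hw, mul_zero, mul_zero, zero_add, max_eq_right (norm_nonneg _)]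

theorem perspR_of_neg_s19 [NormedSpace ℝ H] (φ : H → ℝ) {w : ℝ × H} (hw : w.1 < 0) :
    perspR φ w = ⊤ := by
  rw [perspR, if_neg (lt_asymm hw), if_neg hw.ne]

theorem convexOn_vapnikPersp [NormedSpace ℝ H] (α ε : ℝ) :
    ConvexOn ℝ univ fun y : ℝ × H => vapnikPersp α ε y.1 ‖y.2‖ := by
  have h₁ := (α • LinearMap.fst ℝ ℝ H).convexOn convex_univ
  have h₂ := ((α - ε) • LinearMap.fst ℝ ℝ H).convexOn convex_univ |>.add
    ((convexOn_norm convex_univ).comp_linearMap (LinearMap.snd ℝ ℝ H))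
  exact h₁.sup h₂

def proxDist (z y : ℝ × H) : ℝ := ((z.1 - y.1) ^ 2 + ‖z.2 - y.2‖ ^ 2) / 2

theorem isProx_iff_forall (ψ : ℝ × H → EReal) (z p : ℝ × H) :
    IsProx ψ z p ↔ ∀ y, ψ p + proxDist z p ≤ ψ y + proxDist z y := Iff.rfl

theorem isProx_iff_isMinOn {ψ : ℝ × H → EReal} {f : ℝ × H → ℝ}
    (hpos : ∀ w : ℝ × H, 0 ≤ w.1 → ψ w = f w) (hneg : ∀ w : ℝ × H, w.1 < 0 → ψ w = ⊤)
    (z p : ℝ × H) :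
    IsProx ψ z p ↔ 0 ≤ p.1 ∧ IsMinOn (fun y => f y + proxDist z y) {y | 0 ≤ y.1} p := by
  have hval : ∀ w : ℝ × H, 0 ≤ w.1 → ψ w + proxDist z w = ((f w + proxDist z w : ℝ) : EReal) :=
    fun w hw => by rw [hpos w hw, EReal.coe_add]
  rw [isProx_iff_forall]
  constructor
  · intro h
    have hp : 0 ≤ p.1 := by
      by_contra! hp
      have h0 := h 0
      rw [hneg p hp, EReal.top_add_coe, hval 0 le_rfl] at h0
      exact (EReal.coe_lt_top _).not_ge h0
    refine ⟨hp, fun y hy => ?_⟩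
    have hpy := h y
    rw [hval p hp, hval y hy] at hpy
    exact_mod_cast hpy
  · rintro ⟨hp, hmin⟩ y
    rcases le_or_gt 0 y.1 with hy | hy
    · rw [hval p hp, hval y hy]
      exact_mod_cast hmin hy
    · rw [hneg y hy, EReal.top_add_coe]
      exact le_top

theorem eq_of_proxDist_nonpos {p q : ℝ × H} (h : proxDist p q ≤ 0) : p = q := by
  unfold proxDist at h
  have h₁ : (p.1 - q.1) ^ 2 = 0 := by nlinarith [sq_nonneg (p.1 - q.1), sq_nonneg ‖p.2 - q.2‖]
  have h₂ : ‖p.2 - q.2‖ ^ 2 = 0 := by nlinarith [sq_nonneg (p.1 - q.1), sq_nonneg ‖p.2 - q.2‖]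
  rw [sq_eq_zero_iff, sub_eq_zero] at h₁
  rw [sq_eq_zero_iff, norm_eq_zero, sub_eq_zero] at h₂
  exact Prod.ext h₁ h₂

theorem proxDist_midpoint [InnerProductSpace ℝ H] (z p q : ℝ × H) :
    proxDist z ((1 / 2 : ℝ) • p + (1 / 2 : ℝ) • q) + proxDist p q / 4 =
      (proxDist z p + proxDist z q) / 2 := by
  have hpar := parallelogram_law_with_norm ℝ (z.2 - p.2) (z.2 - q.2)
  rw [show z.2 - p.2 + (z.2 - q.2) = (2 : ℝ) • (z.2 - ((1 / 2 : ℝ) • p.2 + (1 / 2 : ℝ) • q.2))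
      by module, show z.2 - p.2 - (z.2 - q.2) = -(p.2 - q.2) by abel, norm_neg, norm_smul,
    Real.norm_two] at hpar
  simp only [proxDist, Prod.fst_add, Prod.snd_add, Prod.smul_fst, Prod.smul_snd, smul_eq_mul]
  linarith

theorem eq_of_isMinOn_add_proxDist [InnerProductSpace ℝ H] {f : ℝ × H → ℝ}
    {K : Set (ℝ × H)} (hf : ConvexOn ℝ K f) {z p q : ℝ × H} (hp : p ∈ K) (hq : q ∈ K)
    (hpm : IsMinOn (fun y => f y + proxDist z y) K p)
    (hqm : IsMinOn (fun y => f y + proxDist z y) K q) : p = q := by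
  have hm := hf.1 hp hq (by norm_num : (0 : ℝ) ≤ 1 / 2) (by norm_num : (0 : ℝ) ≤ 1 / 2)
    (by norm_num)
  have hfm := hf.2 hp hq (by norm_num : (0 : ℝ) ≤ 1 / 2) (by norm_num : (0 : ℝ) ≤ 1 / 2)
    (by norm_num)
  have hp' : f p + proxDist z p ≤ _ + _ := hpm hm
  have hq' : f q + proxDist z q ≤ _ + _ := hqm hm
  have hmid := proxDist_midpoint z p q
  simp only [smul_eq_mul] at hfm
  exact eq_of_proxDist_nonpos (by linarith)

theorem isProx_vapnik_iff [InnerProductSpace ℝ H] {α ε γ : ℝ} (hε : 0 < ε) (hγ : 0 < γ)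
    {z q : ℝ × H} (hq : 0 ≤ q.1)
    (hmin : IsMinOn (fun y => γ * vapnikPersp α ε y.1 ‖y.2‖ + proxDist z y) {y | 0 ≤ y.1} q)
    (p : ℝ × H) :
    IsProx (fun w => (γ : EReal) * perspR (vapnik α ε) w) z p ↔ p = q := by
  have hconv : ConvexOn ℝ {y : ℝ × H | 0 ≤ y.1} fun y => γ * vapnikPersp α ε y.1 ‖y.2‖ :=
    ((convexOn_vapnikPersp α ε).smul hγ.le).subset (subset_univ _)
      (convex_halfSpace_ge (LinearMap.fst ℝ ℝ H).isLinear 0)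
  rw [isProx_iff_isMinOn (f := fun y => γ * vapnikPersp α ε y.1 ‖y.2‖)
    (fun w hw => by rw [perspR_vapnik α hε hw, EReal.coe_mul])
    (fun w hw => by rw [perspR_of_neg_s19 _ hw, EReal.coe_mul_top_of_pos hγ])]
  constructor
  · rintro ⟨hp, hpm⟩
    exact eq_of_isMinOn_add_proxDist hconv hp hq hpm hmin
  · rintro rfl
    exact ⟨hq, hmin⟩

-- The prox objective at `(s, v)` seen through `r = ‖v‖`, with `ρ = ‖x‖`.
def vapnikPlanar (α ε γ σ ρ s r : ℝ) : ℝ :=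
  γ * vapnikPersp α ε s r + ((σ - s) ^ 2 + (ρ - r) ^ 2) / 2

theorem vapnikPlanar_le (α ε γ σ : ℝ) (x : H) (y : ℝ × H) :
    vapnikPlanar α ε γ σ ‖x‖ y.1 ‖y.2‖ ≤ γ * vapnikPersp α ε y.1 ‖y.2‖ + proxDist (σ, x) y := by
  have h : (‖x‖ - ‖y.2‖) ^ 2 ≤ ‖x - y.2‖ ^ 2 := by
    rw [← sq_abs]
    exact pow_le_pow_left₀ (abs_nonneg _) (abs_norm_sub_norm_le x y.2) 2
  simp only [vapnikPlanar, proxDist]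
  linarith

theorem vapnikPlanar_eq [NormedSpace ℝ H] (α ε γ σ t : ℝ) (x : H) {r : ℝ} (hr₀ : 0 ≤ r)
    (hr : r ≤ ‖x‖) :
    γ * vapnikPersp α ε t ‖(r / ‖x‖) • x‖ + proxDist (σ, x) (t, (r / ‖x‖) • x) =
      vapnikPlanar α ε γ σ ‖x‖ t r := by
  rcases (norm_nonneg x).eq_or_lt with hx | hx
  · obtain rfl : r = 0 := by linarith
    obtain rfl : x = 0 := norm_eq_zero.mp hx.symm
    simp [vapnikPlanar, proxDist]
  have hc : 0 ≤ r / ‖x‖ := div_nonneg hr₀ hx.le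
  have hc' : 0 ≤ 1 - r / ‖x‖ := sub_nonneg.mpr (div_le_one_of_le₀ hr hx.le)
  have h₁ : ‖(r / ‖x‖) • x‖ = r := by
    rw [norm_smul, Real.norm_of_nonneg hc, div_mul_cancel₀ _ hx.ne']
  have h₂ : ‖x - (r / ‖x‖) • x‖ = ‖x‖ - r := by
    rw [show x - (r / ‖x‖) • x = (1 - r / ‖x‖) • x by rw [sub_smul, one_smul], norm_smul,
      Real.norm_of_nonneg hc', sub_mul, one_mul, div_mul_cancel₀ _ hx.ne']
  rw [proxDist, h₁, h₂, vapnikPlanar]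

theorem isMinOn_of_vapnikPlanar [NormedSpace ℝ H] {α ε γ σ t : ℝ} {x : H} {r : ℝ}
    (hr₀ : 0 ≤ r) (hr : r ≤ ‖x‖)
    (hmin : ∀ s r', 0 ≤ s → vapnikPlanar α ε γ σ ‖x‖ t r ≤ vapnikPlanar α ε γ σ ‖x‖ s r') :
    IsMinOn (fun y => γ * vapnikPersp α ε y.1 ‖y.2‖ + proxDist (σ, x) y) {y | 0 ≤ y.1}
      (t, (r / ‖x‖) • x) := fun y hy => by
  dsimp only
  rw [vapnikPlanar_eq α ε γ σ t x hr₀ hr]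
  exact (hmin _ _ hy).trans (vapnikPlanar_le α ε γ σ x y)

end

theorem vapnikPlanar_boundary_le {α ε γ σ ρ s r : ℝ} (hγ : 0 < γ) (hσ : σ ≤ γ * (α - ε))
    (hρ : γ ≤ ρ) (hs : 0 ≤ s) :
    vapnikPlanar α ε γ σ ρ 0 (ρ - γ) ≤ vapnikPlanar α ε γ σ ρ s r := by
  have hM := mul_le_mul_of_nonneg_left (le_max_right (α * s) ((α - ε) * s + r)) hγ.le
  simp only [vapnikPlanar, vapnikPersp, mul_zero, zero_add, max_eq_right (sub_nonneg.mpr hρ)]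
  nlinarith [sq_nonneg (ρ - r - γ), mul_nonneg hs (sub_nonneg.mpr hσ), sq_nonneg s]

theorem vapnikPlanar_smooth_le {α ε γ σ ρ s r : ℝ} (hγ : 0 ≤ γ)
    (hρ : ε * σ + γ * (1 + ε * (ε - α)) ≤ ρ) :
    vapnikPlanar α ε γ σ ρ (σ + γ * (ε - α)) (ρ - γ) ≤ vapnikPlanar α ε γ σ ρ s r := by
  have hM := mul_le_mul_of_nonneg_left (le_max_right (α * s) ((α - ε) * s + r)) hγ
  simp only [vapnikPlanar, vapnikPersp]
  rw [max_eq_right (by nlinarith)]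
  nlinarith [sq_nonneg (s - (σ + γ * (ε - α))), sq_nonneg (ρ - r - γ)]

theorem vapnikPlanar_kink_le {α ε γ σ ρ τ s r : ℝ}
    (hτ : (1 + ε ^ 2) * τ = σ + ε * ρ - γ * α) (h₀ : ε * τ ≤ ρ) (h₁ : ρ - ε * τ ≤ γ) :
    vapnikPlanar α ε γ σ ρ τ (ε * τ) ≤ vapnikPlanar α ε γ σ ρ s r := by
  have hl := le_max_left (α * s) ((α - ε) * s + r)
  have hr := le_max_right (α * s) ((α - ε) * s + r)
  simp only [vapnikPlanar, vapnikPersp]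
  rw [show (α - ε) * τ + ε * τ = α * τ by ring, max_self]
  obtain rfl : σ = (1 + ε ^ 2) * τ + γ * α - ε * ρ := by linarith
  nlinarith [mul_nonneg (sub_nonneg.mpr h₁) (sub_nonneg.mpr hl),
    mul_nonneg (sub_nonneg.mpr h₀) (sub_nonneg.mpr hr), sq_nonneg (s - τ), sq_nonneg (r - ε * τ)]

theorem prox_vapnik_cases_general
    {H : Type*} [NormedAddCommGroup H] [InnerProductSpace ℝ H]
    (α ε γ : ℝ) (hε : 0 < ε) (hγ : 0 < γ)
    (φ : H → ℝ) (hφ : ∀ v : H, φ v = α + max (‖v‖ - ε) 0)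
    (σ : ℝ) (x : H) :
    (σ ≤ γ * (α - ε) → γ < ‖x‖ →
      ∀ p : ℝ × H,
        IsProx (fun w => (γ : EReal) * perspR φ w) (σ, x) p ↔
          p = ((0 : ℝ), (1 - γ / ‖x‖) • x)) ∧
    (γ * (α - ε) < σ → ε * σ + γ * (1 + ε * (ε - α)) ≤ ‖x‖ →
      ∀ p : ℝ × H,
        IsProx (fun w => (γ : EReal) * perspR φ w) (σ, x) p ↔
          p = (σ + γ * (ε - α), (1 - γ / ‖x‖) • x)) ∧
    (γ * α < σ + ε * ‖x‖ → ε * (σ - γ * α) < ‖x‖ →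
      ‖x‖ < ε * σ + γ * (1 + ε * (ε - α)) →
      ∀ p : ℝ × H,
        IsProx (fun w => (γ : EReal) * perspR φ w) (σ, x) p ↔
          p = ((σ + ε * ‖x‖ - γ * α) / (1 + ε ^ 2),
            ((σ + ε * ‖x‖ - γ * α) / (1 + ε ^ 2)) • ((ε / ‖x‖) • x))) := by
  obtain rfl : φ = vapnik α ε := funext hφ
  refine ⟨fun h₁ h₂ => ?_, fun h₁ h₂ => ?_, fun h₁ h₂ h₃ => ?_⟩
  · rw [one_sub_div (hγ.trans h₂).ne']
    exact isProx_vapnik_iff hε hγ le_rfl <| isMinOn_of_vapnikPlanar (sub_nonneg.mpr h₂.le)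
      (sub_le_self _ hγ.le) fun s r hs => vapnikPlanar_boundary_le hγ h₁ h₂.le hs
  · have hx : γ ≤ ‖x‖ := by nlinarith
    rw [one_sub_div (hγ.trans_le hx).ne']
    exact isProx_vapnik_iff hε hγ (by linarith) <| isMinOn_of_vapnikPlanar (sub_nonneg.mpr hx)
      (sub_le_self _ hγ.le) fun s r _ => vapnikPlanar_smooth_le hγ.le h₂
  · set τ := (σ + ε * ‖x‖ - γ * α) / (1 + ε ^ 2)
    have hτ : (1 + ε ^ 2) * τ = σ + ε * ‖x‖ - γ * α := mul_div_cancel₀ _ (by positivity)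
    have hτ₀ : 0 ≤ τ := div_nonneg (by linarith) (by positivity)
    have hx₀ : ε * τ ≤ ‖x‖ := by nlinarith
    have hx₁ : ‖x‖ - ε * τ ≤ γ := by nlinarith
    rw [smul_smul, show τ * (ε / ‖x‖) = ε * τ / ‖x‖ by ring]
    exact isProx_vapnik_iff hε hγ hτ₀ <| isMinOn_of_vapnikPlanar (by positivity) hx₀
      fun s r _ => vapnikPlanar_kink_le hτ hx₀ hx₁

/-- Prox of the perspective of the abstract Vapnik function
`φ = α + max(‖·‖ − ε, 0)`: the three remaining regimes. -/
theorem prox_vapnik_cases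
    {H : Type*} [NormedAddCommGroup H] [InnerProductSpace ℝ H] [CompleteSpace H]
    (α ε γ : ℝ) (hα : 0 < α) (hε : 0 < ε) (hγ : 0 < γ)
    (φ : H → ℝ) (hφ : ∀ v : H, φ v = α + max (‖v‖ - ε) 0)
    (σ : ℝ) (x : H) :
    (σ ≤ γ * (α - ε) → γ < ‖x‖ →
      ∀ p : ℝ × H,
        IsProx (fun w => (γ : EReal) * perspR φ w) (σ, x) p ↔
          p = ((0 : ℝ), (1 - γ / ‖x‖) • x)) ∧
    (γ * (α - ε) < σ → ε * σ + γ * (1 + ε * (ε - α)) ≤ ‖x‖ →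
      ∀ p : ℝ × H,
        IsProx (fun w => (γ : EReal) * perspR φ w) (σ, x) p ↔
          p = (σ + γ * (ε - α), (1 - γ / ‖x‖) • x)) ∧
    (γ * α < σ + ε * ‖x‖ → ε * (σ - γ * α) < ‖x‖ →
      ‖x‖ < ε * σ + γ * (1 + ε * (ε - α)) →
      ∀ p : ℝ × H,
        IsProx (fun w => (γ : EReal) * perspR φ w) (σ, x) p ↔
          p = ((σ + ε * ‖x‖ - γ * α) / (1 + ε ^ 2),
            ((σ + ε * ‖x‖ - γ * α) / (1 + ε ^ 2)) • ((ε / ‖x‖) • x))) :=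
  prox_vapnik_cases_general α ε γ hε hγ φ hφ σ x
end
end
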